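/- arXiv:2311.01947 — 11 statements merged into one kernel-verified Lean document; each statement's English description precedes it below -/
import Mathlib

section
/- Let p be a prime, e ≥ 1, q = p^e, and let a, b be natural numbers with a ≥ 1 and b ≤ e−1. Then every integer n has exactly one representation n = Σ_{i=0}^{a} c_i·s_q(a,b,i) with c_0 ∈ {0,…,p^{e−b}−1}, c_i ∈ {0,…,q−1} for 1 ≤ i ≤ a−1, and c_a ∈ ℤ. -/
open Finset

/-- `s_q(a,b,i)`, with `q = p^e`, written without division:
`s_q(a,b,0) = 1 + q + ⋯ + q^a` and `s_q(a,b,i) = p^{ie-b}·(1 + q + ⋯ + q^{a-i})` for `i ≥ 1`. -/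
def sQ (p e a b i : ℕ) : ℕ :=
  if i = 0 then ∑ j ∈ Finset.range (a + 1), (p ^ e) ^ j
  else p ^ (i * e - b) * ∑ j ∈ Finset.range (a - i + 1), (p ^ e) ^ j

/-!
The weights factor as `s_q(a,b,i) = m_0 ⋯ m_{i-1} · v_i` with radices `m_0 = p^{e-b}`,
`m_i = q` for `i ≥ 1`, and cofactors `v_i = 1 + q + ⋯ + q^{a-i} ≡ 1 (mod m_i)`, `v_a = 1`.
For any such system the expansion exists and is unique, as for ordinary mixed-radix
expansions: reducing `n = c_0 v_0 + m_0 (⋯)` modulo `m_0` forces `c_0 = n mod m_0`,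
and the remaining digits form an expansion of `(n - c_0 v_0) / m_0` for the shifted system.
-/

section MixedRadix

variable (m v : ℕ → ℤ)

def IsMixedRadixRep (r : ℕ) (n : ℤ) (c : Fin (r + 1) → ℤ) : Prop :=
  (∀ i : Fin (r + 1), (i : ℕ) < r → 0 ≤ c i ∧ c i < m i) ∧
    n = ∑ i : Fin (r + 1), c i * ((∏ j ∈ range i, m j) * v i)

theorem sum_mixedRadix_succ (r : ℕ) (c : Fin (r + 2) → ℤ) :
    ∑ i : Fin (r + 2), c i * ((∏ j ∈ range i, m j) * v i) =
      c 0 * v 0 + m 0 * ∑ i : Fin (r + 1),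
        Fin.tail c i * ((∏ j ∈ range i, m (j + 1)) * v (i + 1)) := by
  rw [Fin.sum_univ_succ, mul_sum]
  congr 1
  · simp
  · refine sum_congr rfl fun i _ => ?_
    rw [Fin.val_succ, prod_range_succ']
    simp only [Fin.tail]
    ring

theorem eq_emod_of_eq_mul_add {M w c k n : ℤ} (hw : M ∣ w - 1) (hc₀ : 0 ≤ c) (hcM : c < M)
    (hn : n = c * w + M * k) : c = n % M := by
  have hmod : c ≡ n [ZMOD M] := by
    refine Int.modEq_iff_dvd.mpr ?_
    have : n - c = c * (w - 1) + M * k := by rw [hn]; ring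
    exact this ▸ dvd_add (hw.mul_left c) (dvd_mul_right M k)
  rw [← hmod, Int.emod_eq_of_lt hc₀ hcM]

theorem isMixedRadixRep_succ_iff {r : ℕ} (hm : 0 < m 0) (hv : m 0 ∣ v 0 - 1) (n : ℤ)
    (c : Fin (r + 2) → ℤ) :
    IsMixedRadixRep m v (r + 1) n c ↔
      c 0 = n % m 0 ∧ IsMixedRadixRep (fun i => m (i + 1)) (fun i => v (i + 1)) r
        ((n - n % m 0 * v 0) / m 0) (Fin.tail c) := by
  have hdvd : m 0 ∣ n - n % m 0 * v 0 := by
    have : n - n % m 0 * v 0 = (n - n % m 0) - n % m 0 * (v 0 - 1) := by ring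
    exact this ▸ dvd_sub Int.dvd_self_sub_emod (hv.mul_left _)
  simp only [IsMixedRadixRep, Fin.forall_fin_succ, sum_mixedRadix_succ]
  simp only [Fin.val_zero, Fin.val_succ, Nat.zero_lt_succ, true_implies, Fin.tail,
    add_lt_add_iff_right]
  constructor
  · rintro ⟨⟨⟨hc₀, hcM⟩, hbounds⟩, hn⟩
    have hc : c 0 = n % m 0 := eq_emod_of_eq_mul_add hv hc₀ hcM hn
    refine ⟨hc, hbounds, ?_⟩
    rw [← hc, hn, add_sub_cancel_left, Int.mul_ediv_cancel_left _ hm.ne']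
  · rintro ⟨hc, hbounds, hn'⟩
    refine ⟨⟨hc ▸ ⟨Int.emod_nonneg n hm.ne', Int.emod_lt_of_pos n hm⟩, hbounds⟩, ?_⟩
    rw [← hn', Int.mul_ediv_cancel' hdvd, hc]
    ring

theorem existsUnique_isMixedRadixRep (r : ℕ) (m v : ℕ → ℤ) (hm : ∀ i < r, 0 < m i)
    (hv : ∀ i < r, m i ∣ v i - 1) (hvr : v r = 1) (n : ℤ) :
    ∃! c, IsMixedRadixRep m v r n c := by
  induction r generalizing m v n with
  | zero =>
    refine ⟨fun _ => n, ⟨nofun, by simp [hvr]⟩, fun c ⟨_, hc⟩ => funext fun i => ?_⟩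
    rw [Fin.fin_one_eq_zero i]
    simpa [hvr] using hc.symm
  | succ r ih =>
    have hstep := isMixedRadixRep_succ_iff (r := r) m v (hm 0 r.succ_pos) (hv 0 r.succ_pos) n
    obtain ⟨d, hd, hd_unique⟩ := ih (fun i => m (i + 1)) (fun i => v (i + 1))
      (fun i hi => hm (i + 1) (by omega)) (fun i hi => hv (i + 1) (by omega)) hvr
      ((n - n % m 0 * v 0) / m 0)
    refine ⟨Fin.cons (n % m 0) d, (hstep _).2 ⟨rfl, hd⟩, fun c hc => ?_⟩
    obtain ⟨hc₀, htail⟩ := (hstep c).1 hc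
    rw [← Fin.cons_self_tail c, hc₀, hd_unique _ htail]

end MixedRadix

theorem dvd_geom_sum_sub_one {R : Type*} [CommRing R] (x : R) (k : ℕ) :
    x ∣ ∑ j ∈ range (k + 1), x ^ j - 1 := by
  rw [sum_range_succ', pow_zero, add_sub_cancel_right]
  exact dvd_sum fun j _ => dvd_pow_self x j.succ_ne_zero

section SQ

variable (p e a b : ℕ)

def sQRadix (i : ℕ) : ℤ := (p : ℤ) ^ (if i = 0 then e - b else e)

theorem sQRadix_zero : sQRadix p e b 0 = (p : ℤ) ^ (e - b) := rfl

theorem sQRadix_of_ne_zero {i : ℕ} (hi : i ≠ 0) : sQRadix p e b i = (p : ℤ) ^ e := by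
  simp [sQRadix, hi]

def sQCofactor (i : ℕ) : ℤ := ∑ j ∈ range (a - i + 1), ((p : ℤ) ^ e) ^ j

theorem prod_range_sQRadix (hb : b ≤ e) (k : ℕ) :
    ∏ j ∈ range (k + 1), sQRadix p e b j = (p : ℤ) ^ ((k + 1) * e - b) := by
  simp only [sQRadix, prod_range_succ', Nat.succ_ne_zero, if_false, if_true, prod_const,
    card_range, ← pow_mul, ← pow_add]
  congr 1
  rw [add_mul, one_mul, Nat.mul_comm e k]
  omega

theorem sQ_eq_prod_sQRadix_mul_sQCofactor (hb : b ≤ e) (i : ℕ) :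
    (sQ p e a b i : ℤ) = (∏ j ∈ range i, sQRadix p e b j) * sQCofactor p e a i := by
  rcases i with _ | k
  · simp [sQ, sQCofactor]
  · rw [prod_range_sQRadix p e b hb]
    simp [sQ, sQCofactor]

theorem sQRadix_dvd_sQCofactor_sub_one (i : ℕ) :
    sQRadix p e b i ∣ sQCofactor p e a i - 1 := by
  refine dvd_trans (pow_dvd_pow _ ?_) (dvd_geom_sum_sub_one _ _)
  split <;> omega

theorem sQCofactor_self : sQCofactor p e a a = 1 := by
  simp [sQCofactor]

end SQ

theorem stmt_1_general (p e a b : ℕ) (hp : p.Prime) (ha : 1 ≤ a) (hb : b ≤ e - 1)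
    (n : ℤ) :
    ∃! c : Fin (a + 1) → ℤ,
      (0 ≤ c 0 ∧ c 0 < (p : ℤ) ^ (e - b)) ∧
      (∀ i : Fin (a + 1), 1 ≤ (i : ℕ) → (i : ℕ) ≤ a - 1 → 0 ≤ c i ∧ c i < (p : ℤ) ^ e) ∧
      n = ∑ i : Fin (a + 1), c i * (sQ p e a b i : ℤ) := by
  have hrep := existsUnique_isMixedRadixRep a (sQRadix p e b) (sQCofactor p e a)
    (fun i _ => pow_pos (by exact_mod_cast hp.pos) _)
    (fun i _ => sQRadix_dvd_sQCofactor_sub_one p e a b i) (sQCofactor_self p e a) n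
  refine (existsUnique_congr fun c => ?_).mpr hrep
  simp only [IsMixedRadixRep, ← sQ_eq_prod_sQRadix_mul_sQCofactor p e a b (by omega),
    ← and_assoc]
  refine and_congr_left fun _ => ⟨fun ⟨h₀, hmid⟩ i hi => ?_, fun h => ⟨?_, ?_⟩⟩
  · rcases eq_or_ne i 0 with rfl | hi₀
    · simpa [sQRadix_zero] using h₀
    · rw [sQRadix_of_ne_zero p e b (Fin.val_ne_zero_iff.mpr hi₀)]
      exact hmid i (Nat.one_le_iff_ne_zero.mpr (Fin.val_ne_zero_iff.mpr hi₀)) (by omega)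
  · simpa [sQRadix_zero] using h 0 (by simp; omega)
  · intro i hi₁ hia
    simpa [sQRadix_of_ne_zero p e b (by omega : (i : ℕ) ≠ 0)] using h i (by omega)

/-- Existence and uniqueness of the `S_q(a,b)`-adic expansion of any integer:
`n = ∑_{i=0}^{a} c_i·s_q(a,b,i)` with `c_0 ∈ {0,…,p^{e-b}-1}`, `c_i ∈ {0,…,q-1}` for
`1 ≤ i ≤ a-1`, and `c_a ∈ ℤ` arbitrary. -/
theorem stmt_1 (p e a b : ℕ) (hp : p.Prime) (he : 1 ≤ e) (ha : 1 ≤ a) (hb : b ≤ e - 1)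
    (n : ℤ) :
    ∃! c : Fin (a + 1) → ℤ,
      (0 ≤ c 0 ∧ c 0 < (p : ℤ) ^ (e - b)) ∧
      (∀ i : Fin (a + 1), 1 ≤ (i : ℕ) → (i : ℕ) ≤ a - 1 → 0 ≤ c i ∧ c i < (p : ℤ) ^ e) ∧
      n = ∑ i : Fin (a + 1), c i * (sQ p e a b i : ℤ) :=
  stmt_1_general p e a b hp ha hb n
end

section
/- Let p be a prime, e ≥ 1, q = p^e, and let a, b be natural numbers with a ≥ 1 and b ≤ e−1. For all non-negative integers c_0, c_1, …, c_a there exist a dimension v and a p^{ae−b}-divisible multiset of points M in PG(v−1,q) with cardinality #M = Σ_{i=0}^{a} c_i·s_q(a,b,i). -/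
open Module Finset

noncomputable section
open scoped Classical

variable (F : Type) [Field F] [Fintype F]

instance finiteSubmodule (v : ℕ) : Finite (Submodule F (Fin v → F)) :=
  Finite.of_injective (fun s => (s : Set (Fin v → F))) SetLike.coe_injective

/-- The points of `PG(v-1,q)`: one-dimensional subspaces of `F_q^v`. -/
abbrev PGPoint (v : ℕ) := {W : Submodule F (Fin v → F) // finrank F W = 1}

instance (v : ℕ) : Fintype (PGPoint F v) := Fintype.ofFinite _

/-- Cardinality of a multiset of points. -/
def mCard {v : ℕ} (M : PGPoint F v → ℕ) : ℕ := ∑ P, M P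

/-- Multiplicity of a subspace: the sum of multiplicities over points contained in it. -/
def mVal {v : ℕ} (M : PGPoint F v → ℕ) (S : Submodule F (Fin v → F)) : ℕ :=
  ∑ P : PGPoint F v, if P.1 ≤ S then M P else 0

/-- A multiset of points is `Δ`-divisible if `#M ≡ M(H) (mod Δ)` for every hyperplane `H`. -/
def IsDivisibleMultiset {v : ℕ} (Δ : ℕ) (M : PGPoint F v → ℕ) : Prop :=
  ∀ H : Submodule F (Fin v → F), finrank F H = v - 1 → mCard F M ≡ mVal F M H [MOD Δ]

/-- A set of points is `Δ`-divisible if `|S| ≡ |S ∩ H| (mod Δ)` for every hyperplane `H`. -/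
def IsDivisibleSet {v : ℕ} (Δ : ℕ) (S : Set (PGPoint F v)) : Prop :=
  ∀ H : Submodule F (Fin v → F), finrank F H = v - 1 →
    S.ncard ≡ (S ∩ {P | P.1 ≤ H}).ncard [MOD Δ]

/-- A linear code `C ≤ F_q^m` is `Δ`-divisible if all Hamming weights are divisible by `Δ`. -/
def IsDivisibleCode {m : ℕ} (Δ : ℕ) (C : Submodule F (Fin m → F)) : Prop :=
  ∀ c ∈ C, Δ ∣ hammingNorm c

/-- The effective length: the number of coordinates where some codeword is nonzero. -/
def effLength {m : ℕ} (C : Submodule F (Fin m → F)) : ℕ :=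
  Nat.card {i : Fin m // ∃ c ∈ C, c i ≠ 0}

/-! The multiset is a sum of subspaces: an `(a+1-i)`-dimensional subspace `U_i` of `F_q^(a+1)`,
taken with multiplicity `c_i` for `i = 0` and `c_i·p^(ie-b)` for `i ≥ 1`. A `k`-dimensional
subspace is `q^(k-1)`-divisible, because a hyperplane either contains it or meets it in a
`(k-1)`-dimensional subspace, which misses exactly `q^(k-1)` of its points. So the `i`-th summand
is divisible by `q^a` for `i = 0` and by `p^(ie-b)·q^(a-i) = p^(ae-b)` for `i ≥ 1`, and its
cardinality is `c_i·s_q(a,b,i)`. -/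

lemma exists_submodule_finrank_eq {K V : Type*} [DivisionRing K] [AddCommGroup V] [Module K V]
    {n : ℕ} (hn : n ≤ finrank K V) : ∃ W : Submodule K V, finrank K W = n := by
  obtain ⟨f, hf⟩ := exists_linearIndependent_of_le_finrank hn
  exact ⟨Submodule.span K (Set.range f), by rw [finrank_span_eq_card hf, Fintype.card_fin]⟩

lemma Submodule.finrank_inf_add_one_of_not_le {K V : Type*} [DivisionRing K] [AddCommGroup V]
    [Module K V] [FiniteDimensional K V] {S H : Submodule K V}
    (hH : finrank K V ≤ finrank K H + 1) (hS : ¬ S ≤ H) :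
    finrank K ↥(S ⊓ H) + 1 = finrank K S := by
  have hlt : finrank K H < finrank K ↥(S ⊔ H) :=
    Submodule.finrank_lt_finrank_of_lt (right_lt_sup.mpr hS)
  have hle : finrank K ↥(S ⊔ H) ≤ finrank K V := Submodule.finrank_le _
  have := Submodule.finrank_sup_add_finrank_inf_eq S H
  omega

section Multisets

variable {F} {v : ℕ}

def pointsLeEquivProjectivization (S : Submodule F (Fin v → F)) :
    {P : PGPoint F v // P.1 ≤ S} ≃ Projectivization F S :=
  (Equiv.subtypeSubtypeEquivSubtypeInter (fun W : Submodule F (Fin v → F) => finrank F W = 1)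
      (· ≤ S)).trans <|
    (Equiv.subtypeEquivRight fun _ => And.comm).trans <|
    (Equiv.subtypeSubtypeEquivSubtypeInter (· ≤ S)
      (fun W : Submodule F (Fin v → F) => finrank F W = 1)).symm.trans <|
    ((Submodule.MapSubtype.orderIso S).toEquiv.subtypeEquiv fun W => by
      change _ ↔ finrank F (W.map S.subtype) = 1
      rw [Submodule.finrank_map_subtype_eq]).symm.trans
    (Projectivization.equivSubmodule F S).symm

lemma card_points_le (S : Submodule F (Fin v → F)) :
    #{P : PGPoint F v | P.1 ≤ S} = ∑ j ∈ range (finrank F S), Fintype.card F ^ j := by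
  rw [← Fintype.card_subtype, ← Nat.card_eq_fintype_card,
    Nat.card_congr (pointsLeEquivProjectivization S),
    Projectivization.card_of_finrank F S rfl, Nat.card_eq_fintype_card]

def subspaceIndicator (S : Submodule F (Fin v → F)) (P : PGPoint F v) : ℕ :=
  if P.1 ≤ S then 1 else 0

lemma mCard_eq_mVal_top (M : PGPoint F v → ℕ) : mCard F M = mVal F M ⊤ := by
  simp [mCard, mVal]

lemma mVal_sum {ι : Type*} (s : Finset ι) (M : ι → PGPoint F v → ℕ)
    (T : Submodule F (Fin v → F)) : mVal F (∑ i ∈ s, M i) T = ∑ i ∈ s, mVal F (M i) T := by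
  simp only [mVal, Finset.sum_apply]
  rw [Finset.sum_comm]
  refine Finset.sum_congr rfl fun P _ => ?_
  split_ifs <;> simp

lemma mVal_smul (n : ℕ) (M : PGPoint F v → ℕ) (T : Submodule F (Fin v → F)) :
    mVal F (n • M) T = n * mVal F M T := by
  simp [mVal, Finset.mul_sum, mul_ite]

lemma mVal_subspaceIndicator (S T : Submodule F (Fin v → F)) :
    mVal F (subspaceIndicator S) T = #{P : PGPoint F v | P.1 ≤ S ⊓ T} := by
  rw [Finset.card_filter]
  refine Finset.sum_congr rfl fun P _ => ?_
  simp only [subspaceIndicator, le_inf_iff]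
  split_ifs <;> tauto

lemma IsDivisibleMultiset.of_dvd {Δ Δ' : ℕ} {M : PGPoint F v → ℕ}
    (hM : IsDivisibleMultiset F Δ' M) (h : Δ ∣ Δ') : IsDivisibleMultiset F Δ M :=
  fun H hH => (hM H hH).of_dvd h

lemma IsDivisibleMultiset.smul {Δ : ℕ} {M : PGPoint F v → ℕ} (hM : IsDivisibleMultiset F Δ M)
    (n : ℕ) : IsDivisibleMultiset F (n * Δ) (n • M) := by
  intro H hH
  rw [mCard_eq_mVal_top, mVal_smul, mVal_smul, ← mCard_eq_mVal_top]
  exact (hM H hH).mul_left' n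

lemma IsDivisibleMultiset.sum {Δ : ℕ} {ι : Type*} {s : Finset ι} {M : ι → PGPoint F v → ℕ}
    (hM : ∀ i ∈ s, IsDivisibleMultiset F Δ (M i)) : IsDivisibleMultiset F Δ (∑ i ∈ s, M i) := by
  intro H hH
  rw [mCard_eq_mVal_top, mVal_sum, mVal_sum]
  exact Nat.ModEq.sum fun i hi => by rw [← mCard_eq_mVal_top]; exact hM i hi H hH

lemma isDivisibleMultiset_subspaceIndicator (S : Submodule F (Fin v → F)) :
    IsDivisibleMultiset F (Fintype.card F ^ (finrank F S - 1)) (subspaceIndicator S) := by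
  intro H hH
  rw [mCard_eq_mVal_top, mVal_subspaceIndicator, mVal_subspaceIndicator, inf_top_eq]
  by_cases hSH : S ≤ H
  · rw [inf_eq_left.mpr hSH]
  · have hdim := Submodule.finrank_inf_add_one_of_not_le (by simp [hH]; omega) hSH
    rw [card_points_le, card_points_le, ← hdim, Finset.sum_range_succ, Nat.add_sub_cancel]
    exact Nat.add_modulus_modEq_iff.mpr rfl

end Multisets

def sQCoeff (p e b i : ℕ) : ℕ := if i = 0 then 1 else p ^ (i * e - b)

lemma sQ_eq_sQCoeff_mul (p e a b i : ℕ) :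
    sQ p e a b i = sQCoeff p e b i * ∑ j ∈ range (a - i + 1), (p ^ e) ^ j := by
  unfold sQ sQCoeff
  split_ifs with hi <;> simp [hi]

lemma pow_dvd_sQCoeff_mul_pow (p e b : ℕ) {a i : ℕ} (hi : i ≤ a) :
    p ^ (a * e - b) ∣ sQCoeff p e b i * (p ^ e) ^ (a - i) := by
  rw [← pow_mul]
  unfold sQCoeff
  split_ifs with hi0
  · subst hi0
    rw [one_mul, mul_comm]
    exact pow_dvd_pow p (Nat.sub_le _ _)
  · rw [← pow_add]
    refine pow_dvd_pow p ?_
    have : i * e + e * (a - i) = a * e := by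
      rw [mul_comm e, ← add_mul, Nat.add_sub_cancel' hi]
    omega

theorem stmt_2 (p e a b : ℕ) (hF : Fintype.card F = p ^ e) (c : Fin (a + 1) → ℕ) :
    ∃ (v : ℕ) (M : PGPoint F v → ℕ),
      IsDivisibleMultiset F (p ^ (a * e - b)) M ∧
      mCard F M = ∑ i : Fin (a + 1), c i * sQ p e a b i := by
  choose U hU using fun i : Fin (a + 1) =>
    exists_submodule_finrank_eq (K := F) (V := Fin (a + 1) → F) (n := a + 1 - i)
      (by rw [Module.finrank_fin_fun]; omega)
  refine ⟨a + 1, ∑ i, (c i * sQCoeff p e b i) • subspaceIndicator (U i), ?_, ?_⟩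
  · refine IsDivisibleMultiset.sum fun i _ => ?_
    refine ((isDivisibleMultiset_subspaceIndicator (U i)).smul _).of_dvd ?_
    rw [hU, hF, show a + 1 - i - 1 = a - i by omega, mul_assoc]
    exact Dvd.dvd.mul_left (pow_dvd_sQCoeff_mul_pow p e b i.is_le) _
  · rw [mCard_eq_mVal_top, mVal_sum]
    refine Finset.sum_congr rfl fun i _ => ?_
    rw [mVal_smul, mVal_subspaceIndicator, inf_top_eq, card_points_le, hU, hF,
      sQ_eq_sQCoeff_mul, mul_assoc, show a + 1 - i = a - i + 1 by omega]

end
end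

section
/- Let p be a prime, e ≥ 1, q = p^e, and let b be an integer with 0 ≤ b ≤ e−1. If M is a p^{e−b}-divisible multiset of points in PG(v−1,q) of cardinality n, then there exist non-negative integers s and t such that n = s·(q+1) + t·p^{e−b}. -/
open Module Finset

noncomputable section
open scoped Classical

variable (F : Type) [Field F] [Fintype F]

variable {V : Type} [AddCommGroup V] [Module F V] [Finite V]

instance auxFinSubmodule : Finite (Submodule F V) :=
  Finite.of_injective (fun s => (s : Set V)) SetLike.coe_injective

abbrev Pt (V : Type) [AddCommGroup V] [Module F V] := {W : Submodule F V // finrank F W = 1}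

noncomputable instance auxFintypePt : Fintype (Pt F V) := Fintype.ofFinite _

lemma span_eq_of_mem {P : Submodule F V} (hP : finrank F P = 1) {y : V} (hy : y ∈ P)
    (hy0 : y ≠ 0) : Submodule.span F {y} = P := by
  apply Submodule.eq_of_le_of_finrank_le (Submodule.span_le.2 (by simpa using hy))
  rw [hP, finrank_span_singleton hy0]

lemma L1 (H : Submodule F V) :
    Nat.card {P : Pt F V // ¬ P.1 ≤ H} * (Fintype.card F - 1)
      = Nat.card V - Nat.card H := by
  letI : Fintype V := Fintype.ofFinite V
  set q := Fintype.card F with hq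
  have h0H : (0:V) ∈ H := H.zero_mem
  -- the map from vectors outside H to points
  have hfmem : ∀ x : {x : V // x ∉ H}, finrank F (Submodule.span F {x.1}) = 1 := by
    intro x
    exact finrank_span_singleton (fun h => x.2 (h ▸ h0H))
  set f : {x : V // x ∉ H} → Pt F V := fun x => ⟨Submodule.span F {x.1}, hfmem x⟩ with hf
  have hcardA : Fintype.card {x : V // x ∉ H} = Nat.card V - Nat.card H := by
    rw [Fintype.card_subtype_compl, Nat.card_eq_fintype_card, Nat.card_eq_fintype_card]
  have key : Fintype.card {x : V // x ∉ H}
      = ∑ P : Pt F V, (Finset.univ.filter fun a => f a = P).card := by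
    rw [← Finset.card_univ]
    exact Finset.card_eq_sum_card_fiberwise (fun x _ => Finset.mem_univ (f x))
  have fiber : ∀ P : Pt F V,
      (Finset.univ.filter fun a => f a = P).card = if ¬ P.1 ≤ H then q - 1 else 0 := by
    intro P
    rw [← Fintype.card_subtype]
    by_cases hP : P.1 ≤ H
    · simp only [hP, not_true, if_neg, ite_false]
      rw [Fintype.card_eq_zero_iff]
      constructor
      rintro ⟨⟨x, hxH⟩, hfa⟩
      have : Submodule.span F {x} = P.1 := congrArg Subtype.val hfa
      exact hxH (hP (this ▸ Submodule.mem_span_singleton_self x))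
    · simp only [hP, not_false_iff, ite_true]
      have e : {a : {x : V // x ∉ H} // f a = P} ≃ {y : ↥P.1 // y ≠ 0} := by
        refine ⟨fun a => ⟨⟨a.1.1, ?_⟩, ?_⟩, fun y => ⟨⟨y.1.1, ?_⟩, ?_⟩, fun a => rfl, fun y => rfl⟩
        · have : Submodule.span F {a.1.1} = P.1 := congrArg Subtype.val a.2
          exact this ▸ Submodule.mem_span_singleton_self a.1.1
        · intro h
          have : a.1.1 = 0 := congrArg Subtype.val h
          exact a.1.2 (this ▸ h0H)
        · -- y.1.1 ∉ H
          intro hyH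
          have hy0 : y.1.1 ≠ 0 := fun h => y.2 (Subtype.ext h)
          exact hP ((span_eq_of_mem F P.2 y.1.2 hy0) ▸ Submodule.span_le.2 (by simpa using hyH))
        · -- f ⟨y.1.1, _⟩ = P
          have hy0 : y.1.1 ≠ 0 := fun h => y.2 (Subtype.ext h)
          exact Subtype.ext (span_eq_of_mem F P.2 y.1.2 hy0)
      rw [Fintype.card_congr e]
      have : Fintype.card {y : ↥P.1 // ¬ y = 0} = Fintype.card ↥P.1 - Fintype.card {y : ↥P.1 // y = 0} :=
        Fintype.card_subtype_compl _
      simp only [ne_eq]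
      rw [this, Fintype.card_subtype_eq (0 : ↥P.1)]
      have : Fintype.card ↥P.1 = q ^ finrank F P.1 := card_eq_pow_finrank
      rw [this, P.2, pow_one]
  -- combine
  rw [key] at hcardA
  rw [← hcardA]
  have : ∑ P : Pt F V, (Finset.univ.filter fun a => f a = P).card
      = ∑ P : Pt F V, if ¬ P.1 ≤ H then q - 1 else 0 := by
    exact Finset.sum_congr rfl fun P _ => fiber P
  rw [this, Finset.sum_ite, Finset.sum_const, Finset.sum_const]
  simp only [smul_eq_mul, mul_zero, add_zero]
  rw [Nat.card_eq_fintype_card, Fintype.card_subtype]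

section Derived
variable {V : Type} [AddCommGroup V] [Module F V] [Finite V]

lemma gsum_mul (q : ℕ) (hq : 1 ≤ q) : ∀ d : ℕ, (∑ j ∈ Finset.range d, q^j) * (q-1) + 1 = q^d := by
  intro d
  induction d with
  | zero => simp
  | succ d ih =>
    rw [Finset.sum_range_succ, add_mul, add_right_comm, ih, pow_succ]
    have : q ^ d + q ^ d * (q - 1) = q ^ d * (1 + (q-1)) := by ring
    rw [this, Nat.add_sub_cancel' hq]

lemma card_V_eq (d : ℕ) (hd : finrank F V = d) : Nat.card V = Fintype.card F ^ d := by
  letI : Fintype V := Fintype.ofFinite V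
  rw [Nat.card_eq_fintype_card, card_eq_pow_finrank (K := F), hd]

lemma card_pt_mul (d : ℕ) (hd : finrank F V = d) :
    Nat.card (Pt F V) * (Fintype.card F - 1) = Fintype.card F ^ d - 1 := by
  have h := L1 F (⊥ : Submodule F V)
  have e : Nat.card {P : Pt F V // ¬ P.1 ≤ ⊥} = Nat.card (Pt F V) := by
    apply Nat.card_congr
    apply Equiv.subtypeUnivEquiv
    intro P hP
    have hb : P.1 = ⊥ := le_bot_iff.1 hP
    have h1 := P.2
    rw [hb, finrank_bot] at h1
    exact absurd h1 (by omega)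
  have hbot : Nat.card ↥(⊥ : Submodule F V) = 1 := by
    simp
  rw [e, hbot, card_V_eq F d hd] at h
  exact h

lemma card_pt_two (h2 : finrank F V = 2) : Nat.card (Pt F V) = Fintype.card F + 1 := by
  have h := card_pt_mul F 2 h2
  have hq : 2 ≤ Fintype.card F := Fintype.one_lt_card
  obtain ⟨k, hk⟩ : ∃ k, Fintype.card F = k + 2 := ⟨Fintype.card F - 2, by omega⟩
  rw [hk] at h ⊢
  rw [show (k+2)^2 = k*k+4*k+4 from by ring] at h
  have h' : Nat.card (Pt F V) * (k + 2 - 1) = (k + 3) * (k + 2 - 1) := by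
    rw [show (k+3)*(k+2-1) = k*k+4*k+3 from by rw [show k+2-1 = k+1 from rfl]; ring]
    omega
  have := Nat.eq_of_mul_eq_mul_right (show 0 < k + 2 - 1 by omega) h'
  omega

lemma card_notle (d : ℕ) (hd : finrank F V = d) (hd1 : 1 ≤ d) (H : Submodule F V)
    (hH : finrank F H = d - 1) :
    Nat.card {P : Pt F V // ¬ P.1 ≤ H} = Fintype.card F ^ (d-1) := by
  have h := L1 F H
  have hq : 2 ≤ Fintype.card F := Fintype.one_lt_card
  set q := Fintype.card F
  have hcH : Nat.card ↥H = q ^ (d-1) := by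
    letI : Fintype V := Fintype.ofFinite V
    rw [Nat.card_eq_fintype_card, card_eq_pow_finrank (K := F), hH]
  rw [card_V_eq F d hd, hcH] at h
  have hfac : q ^ (d-1) * (q - 1) = q ^ d - q ^ (d-1) := by
    rw [Nat.mul_sub_one, ← pow_succ]
    congr 2
    omega
  rw [← hfac] at h
  exact Nat.eq_of_mul_eq_mul_right (by omega) h

lemma card_pt_split (H : Submodule F V) :
    Nat.card (Pt F V) = Nat.card {P : Pt F V // P.1 ≤ H} + Nat.card {P : Pt F V // ¬ P.1 ≤ H} := by
  simp only [Nat.card_eq_fintype_card]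
  rw [Fintype.card_subtype_compl]
  have := Fintype.card_subtype_le (fun P : Pt F V => P.1 ≤ H)
  omega

lemma sum_ite_le_card (H : Submodule F V) :
    ∑ P : Pt F V, (if P.1 ≤ H then 1 else 0) = Nat.card {P : Pt F V // P.1 ≤ H} := by
  rw [Nat.card_eq_fintype_card, Fintype.card_subtype, Finset.sum_ite, Finset.sum_const,
    Finset.sum_const]
  simp

end Derived


section Quot
variable {V : Type} [AddCommGroup V] [Module F V] [Finite V] (U₀ : Submodule F V)

lemma finite_quot : Finite (V ⧸ U₀) := Finite.of_surjective _ (Submodule.mkQ_surjective U₀)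

lemma le_comap_of_ker {S : Submodule F (V ⧸ U₀)} : U₀ ≤ Submodule.comap U₀.mkQ S := by
  intro x hx
  simp only [Submodule.mem_comap, Submodule.mkQ_apply]
  rw [show (Submodule.Quotient.mk x : V ⧸ U₀) = 0 from (Submodule.Quotient.mk_eq_zero U₀).2 hx]
  exact S.zero_mem

lemma finrank_comap_mkQ (hU : finrank F U₀ = 1) (S : Submodule F (V ⧸ U₀)) :
    finrank F (Submodule.comap U₀.mkQ S) = finrank F S + 1 := by
  set K := Submodule.comap U₀.mkQ S with hK
  have h1 := LinearMap.finrank_range_add_finrank_ker (U₀.mkQ.domRestrict K)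
  rw [LinearMap.range_domRestrict, LinearMap.ker_domRestrict, Submodule.ker_mkQ,
    Submodule.map_comap_eq_of_surjective (Submodule.mkQ_surjective U₀)] at h1
  have h2 : finrank F (Submodule.comap K.subtype U₀) = 1 := by
    rw [(Submodule.comapSubtypeEquivOfLe (le_comap_of_ker F U₀)).finrank_eq, hU]
  rw [h2] at h1
  exact h1.symm

lemma finrank_map_mkQ (hU : finrank F U₀ = 1) (P : Submodule F V) (hP : finrank F P = 1)
    (hne : P ≠ U₀) : finrank F (Submodule.map U₀.mkQ P) = 1 := by
  have h1 := LinearMap.finrank_range_add_finrank_ker (U₀.mkQ.domRestrict P)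
  rw [LinearMap.range_domRestrict, LinearMap.ker_domRestrict, Submodule.ker_mkQ] at h1
  have h2 : Submodule.comap P.subtype U₀ = ⊥ := by
    rw [Submodule.eq_bot_iff]
    rintro ⟨x, hxP⟩ hx
    simp only [Submodule.mem_comap, Submodule.subtype_apply] at hx
    by_contra h0
    have hx0 : x ≠ 0 := fun h => h0 (Subtype.ext (by simpa using h))
    exact hne ((span_eq_of_mem F hP hxP hx0).symm.trans (span_eq_of_mem F hU hx hx0))
  rw [h2, finrank_bot, add_zero, hP] at h1
  exact h1

lemma point_le_comap_iff (hU : finrank F U₀ = 1) (P : Pt F V) (hne : P.1 ≠ U₀)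
    (P' : Pt F (V ⧸ U₀)) :
    P.1 ≤ Submodule.comap U₀.mkQ P'.1 ↔ P'.1 = Submodule.map U₀.mkQ P.1 := by
  constructor
  · intro h
    have hm : Submodule.map U₀.mkQ P.1 ≤ P'.1 := Submodule.map_le_iff_le_comap.2 h
    refine (Submodule.eq_of_le_of_finrank_le hm ?_).symm
    rw [P'.2, finrank_map_mkQ F U₀ hU P.1 P.2 hne]
  · intro h
    rw [h]
    exact Submodule.le_comap_map _ _

lemma quot_sum (hU : finrank F U₀ = 1) (M : Pt F V → ℕ)
    (hM0 : ∀ P : Pt F V, P.1 = U₀ → M P = 0) (S' : Submodule F (V ⧸ U₀)) :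
    haveI : Finite (V ⧸ U₀) := finite_quot F U₀
    (∑ P' : Pt F (V ⧸ U₀), if P'.1 ≤ S' then
        (∑ P : Pt F V, if P.1 ≤ Submodule.comap U₀.mkQ P'.1 then M P else 0) else 0)
      = ∑ P : Pt F V, if P.1 ≤ Submodule.comap U₀.mkQ S' then M P else 0 := by
  haveI : Finite (V ⧸ U₀) := finite_quot F U₀
  have step1 : (∑ P' : Pt F (V ⧸ U₀), if P'.1 ≤ S' then
        (∑ P : Pt F V, if P.1 ≤ Submodule.comap U₀.mkQ P'.1 then M P else 0) else 0)
      = ∑ P' : Pt F (V ⧸ U₀), ∑ P : Pt F V,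
          if P'.1 ≤ S' ∧ P.1 ≤ Submodule.comap U₀.mkQ P'.1 then M P else 0 := by
    refine Finset.sum_congr rfl fun P' _ => ?_
    by_cases h : P'.1 ≤ S' <;> simp [h]
  rw [step1, Finset.sum_comm]
  refine Finset.sum_congr rfl fun P _ => ?_
  by_cases hMP : M P = 0
  · simp [hMP]
  have hne : P.1 ≠ U₀ := fun h => hMP (hM0 P h)
  set Pm : Pt F (V ⧸ U₀) := ⟨Submodule.map U₀.mkQ P.1, finrank_map_mkQ F U₀ hU P.1 P.2 hne⟩
    with hPm
  have hiff : ∀ P' : Pt F (V ⧸ U₀),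
      (P'.1 ≤ S' ∧ P.1 ≤ Submodule.comap U₀.mkQ P'.1)
        ↔ (P' = Pm ∧ P.1 ≤ Submodule.comap U₀.mkQ S') := by
    intro P'
    constructor
    · rintro ⟨h1, h2⟩
      have hm := (point_le_comap_iff F U₀ hU P hne P').1 h2
      refine ⟨Subtype.ext hm, Submodule.map_le_iff_le_comap.1 (hm ▸ h1)⟩
    · rintro ⟨rfl, h2⟩
      exact ⟨Submodule.map_le_iff_le_comap.2 h2, Submodule.le_comap_map _ _⟩
  have : (∑ P' : Pt F (V ⧸ U₀), if P'.1 ≤ S' ∧ P.1 ≤ Submodule.comap U₀.mkQ P'.1 then M P else 0)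
      = ∑ P' : Pt F (V ⧸ U₀), if P' = Pm ∧ P.1 ≤ Submodule.comap U₀.mkQ S' then M P else 0 :=
    Finset.sum_congr rfl fun P' _ => if_congr (hiff P') rfl rfl
  rw [this]
  by_cases hC : P.1 ≤ Submodule.comap U₀.mkQ S'
  · simp [hC, Finset.sum_ite_eq']
  · simp [hC]

end Quot

lemma sum_univ_indep {α β : Type*} [AddCommMonoid β] (i1 i2 : Fintype α) (f : α → β) :
    @Finset.sum α β _ (@Finset.univ α i1) f = @Finset.sum α β _ (@Finset.univ α i2) f := by
  rw [Subsingleton.elim i1 i2]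

theorem main (q Δ : ℕ) (hq : Fintype.card F = q) (hΔ : 0 < Δ) (hΔq : Δ ∣ q) :
    ∀ n d : ℕ, ∀ (V : Type) [AddCommGroup V] [Module F V] [Finite V],
    ∀ M : Pt F V → ℕ, finrank F V = d → (∑ P : Pt F V, M P) = n →
    (∀ H : Submodule F V, finrank F H = d - 1 →
       (∑ P : Pt F V, M P) ≡ (∑ P : Pt F V, if P.1 ≤ H then M P else 0) [MOD Δ]) →
    ∃ s t : ℕ, n = s * (q + 1) + t * Δ := by
  have hq2 : 2 ≤ q := hq ▸ Fintype.one_lt_card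
  intro n
  induction n using Nat.strong_induction_on with
  | _ n ihn =>
  intro d
  induction d using Nat.strong_induction_on with
  | _ d ihd =>
  intro V _ _ _ M hdim hcard hdiv
  rcases Nat.lt_or_ge d 2 with hd2 | hd2
  · -- d = 0 or d = 1
    interval_cases d
    · -- d = 0 : no points
      haveI : IsEmpty (Pt F V) := by
        refine ⟨fun P => ?_⟩
        have h1 := P.2
        have h2 : finrank F P.1 ≤ finrank F V := Submodule.finrank_le P.1
        omega
      rw [Finset.univ_eq_empty, Finset.sum_empty] at hcard
      exact ⟨0, 0, by omega⟩
    · -- d = 1 : the only hyperplane is ⊥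
      have hbot : finrank F (⊥ : Submodule F V) = 1 - 1 := by rw [finrank_bot]
      have h := hdiv ⊥ hbot
      have hz : (∑ P : Pt F V, if P.1 ≤ ⊥ then M P else 0) = 0 := by
        refine Finset.sum_eq_zero fun P _ => ?_
        rw [if_neg]
        intro hP
        have h1 := P.2
        rw [le_bot_iff.1 hP, finrank_bot] at h1
        exact absurd h1 (by omega)
      rw [hcard, hz] at h
      obtain ⟨t, ht⟩ := (Nat.modEq_zero_iff_dvd).1 h
      exact ⟨0, t, by rw [zero_mul, zero_add, ht, mul_comm]⟩
  by_cases hall : ∀ P : Pt F V, 0 < M P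
  · -- all multiplicities positive: subtract the all-one multiset
    obtain ⟨m, rfl⟩ : ∃ m, d = m + 2 := ⟨d - 2, by omega⟩
    have hNmul := card_pt_mul F (V := V) (m + 2) hdim
    rw [hq] at hNmul
    have hG := gsum_mul q (by omega) (m + 2)
    have hn₀G : Nat.card (Pt F V) = ∑ j ∈ Finset.range (m + 2), q ^ j :=
      Nat.eq_of_mul_eq_mul_right (show 0 < q - 1 by omega) (by omega)
    have hsplit : Nat.card (Pt F V) = (∑ j ∈ Finset.range m, q ^ (j + 2)) + q + 1 := by
      rw [hn₀G, Finset.sum_range_succ' (fun j => q ^ j) (m + 1),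
        Finset.sum_range_succ' (fun j => q ^ (j + 1)) m]
      simp only [pow_zero, pow_succ, pow_one]
      ring_nf
    have hΔdvd : Δ ∣ ∑ j ∈ Finset.range m, q ^ (j + 2) :=
      Finset.dvd_sum fun j _ => hΔq.trans (dvd_pow_self q (by omega))
    obtain ⟨t₀, ht₀⟩ := hΔdvd
    have ht₀' : (∑ j ∈ Finset.range m, q ^ (j + 2)) = t₀ * Δ := by rw [ht₀, mul_comm]
    -- the all-one multiset is divisible
    have hallone : ∀ H : Submodule F V, finrank F H = (m + 2) - 1 →
        Nat.card (Pt F V) ≡ Nat.card {P : Pt F V // P.1 ≤ H} [MOD Δ] := by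
      intro H hH
      have hsplit2 := card_pt_split F (V := V) H
      have hnot := card_notle F (V := V) (m + 2) hdim (by omega) H hH
      rw [hq] at hnot
      have hdv : Δ ∣ Nat.card {P : Pt F V // ¬ P.1 ≤ H} := by
        rw [hnot]
        exact hΔq.trans (dvd_pow_self q (by omega))
      obtain ⟨c, hc⟩ := hdv
      rw [hsplit2, hc]
      exact ((Nat.modEq_iff_dvd' (Nat.le_add_right _ _)).2 ⟨c, by omega⟩).symm
    -- the reduced multiset
    have hsum1 : (∑ P : Pt F V, (M P - 1)) + Nat.card (Pt F V) = n := by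
      have h : ∑ P : Pt F V, ((M P - 1) + 1) = ∑ P : Pt F V, M P :=
        Finset.sum_congr rfl fun P _ => by have := hall P; omega
      rw [Finset.sum_add_distrib, Finset.sum_const, smul_eq_mul, mul_one, Finset.card_univ,
        hcard] at h
      rw [Nat.card_eq_fintype_card]
      exact h
    have hn₀pos : 0 < Nat.card (Pt F V) := by
      haveI : Nontrivial V := by
        rw [← Module.finrank_pos_iff (R := F)]
        omega
      obtain ⟨x, hx⟩ := exists_ne (0 : V)
      haveI : Nonempty (Pt F V) := ⟨⟨Submodule.span F {x}, finrank_span_singleton hx⟩⟩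
      exact Nat.card_pos
    have hdiv₁ : ∀ H : Submodule F V, finrank F H = (m + 2) - 1 →
        (∑ P : Pt F V, (M P - 1)) ≡
          (∑ P : Pt F V, if P.1 ≤ H then M P - 1 else 0) [MOD Δ] := by
      intro H hH
      have hv : (∑ P : Pt F V, if P.1 ≤ H then M P - 1 else 0)
          + (∑ P : Pt F V, if P.1 ≤ H then 1 else 0)
          = ∑ P : Pt F V, if P.1 ≤ H then M P else 0 := by
        rw [← Finset.sum_add_distrib]
        refine Finset.sum_congr rfl fun P _ => ?_
        by_cases h : P.1 ≤ H
        · simp only [if_pos h]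
          have := hall P
          omega
        · simp [h]
      refine Nat.ModEq.add_right_cancel (hallone H hH) ?_
      rw [hsum1, ← sum_ite_le_card F H, hv, ← hcard]
      exact hdiv H hH
    obtain ⟨s₁, t₁, h₁⟩ := ihn (n - Nat.card (Pt F V))
      (show n - Nat.card (Pt F V) < n by omega) (m + 2) V
      (fun P => M P - 1) hdim
      (show (∑ P : Pt F V, (M P - 1)) = n - Nat.card (Pt F V) by omega) hdiv₁
    refine ⟨s₁ + 1, t₁ + t₀, ?_⟩
    rw [add_mul, add_mul, one_mul]
    omega
  · -- some point has multiplicity zero: pass to the quotient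
    push_neg at hall
    obtain ⟨P₀, hP₀⟩ := hall
    have hMP₀ : M P₀ = 0 := by omega
    have hU : finrank F P₀.1 = 1 := P₀.2
    haveI : Finite (V ⧸ P₀.1) := finite_quot F P₀.1
    have hM0 : ∀ P : Pt F V, P.1 = P₀.1 → M P = 0 := by
      intro P hP
      have : P = P₀ := Subtype.ext hP
      rw [this]; exact hMP₀
    have hdim' : finrank F (V ⧸ P₀.1) = d - 1 := by
      have := Submodule.finrank_quotient_add_finrank P₀.1
      rw [hU, hdim] at this
      omega
    have hcard' : (∑ P' : Pt F (V ⧸ P₀.1),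
        ∑ P : Pt F V, if P.1 ≤ Submodule.comap P₀.1.mkQ P'.1 then M P else 0) = n := by
      have h := quot_sum F P₀.1 hU M hM0 ⊤
      simp only [le_top, if_true, Submodule.comap_top] at h
      rw [h]
      exact hcard
    have hdiv' : ∀ H' : Submodule F (V ⧸ P₀.1), finrank F H' = (d - 1) - 1 →
        (∑ P' : Pt F (V ⧸ P₀.1),
            ∑ P : Pt F V, if P.1 ≤ Submodule.comap P₀.1.mkQ P'.1 then M P else 0) ≡
          (∑ P' : Pt F (V ⧸ P₀.1), if P'.1 ≤ H' then
            (∑ P : Pt F V, if P.1 ≤ Submodule.comap P₀.1.mkQ P'.1 then M P else 0) else 0)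
          [MOD Δ] := by
      intro H' hH'
      have hsum := quot_sum F P₀.1 hU M hM0 H'
      have hcomap : finrank F (Submodule.comap P₀.1.mkQ H') = d - 1 := by
        rw [finrank_comap_mkQ F P₀.1 hU, hH']
        omega
      have h := hdiv (Submodule.comap P₀.1.mkQ H') hcomap
      rw [hcard', hsum, ← hcard]
      exact h
    exact ihd (d - 1) (by omega) (V ⧸ P₀.1)
      (fun P' => ∑ P : Pt F V, if P.1 ≤ Submodule.comap P₀.1.mkQ P'.1 then M P else 0)
      hdim' hcard' hdiv'

lemma bridge1 {v : ℕ} (M : PGPoint F v → ℕ) :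
    (@Finset.sum (PGPoint F v) ℕ _ (@Finset.univ _ (auxFintypePt F (V := Fin v → F))) M)
      = mCard F M := by
  unfold mCard
  exact sum_univ_indep _ _ M

lemma bridge2 {v : ℕ} (M : PGPoint F v → ℕ) (H : Submodule F (Fin v → F)) :
    (@Finset.sum (PGPoint F v) ℕ _ (@Finset.univ _ (auxFintypePt F (V := Fin v → F)))
        (fun P => if P.1 ≤ H then M P else 0))
      = mVal F M H := by
  unfold mVal
  exact sum_univ_indep _ _ _

/-- For `q = p^e` and `0 ≤ b ≤ e-1`, if `M` is a `p^{e-b}`-divisible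
multiset of points in `PG(v-1,q)` of cardinality `n`, then `n = s·(q+1) + t·p^{e-b}` for some
non-negative integers `s, t`. -/
theorem stmt_3 (p e b : ℕ) (hp : p.Prime) (he : 1 ≤ e) (hb : b ≤ e - 1)
    (hF : Fintype.card F = p ^ e) (v n : ℕ) (M : PGPoint F v → ℕ)
    (hdiv : IsDivisibleMultiset F (p ^ (e - b)) M) (hn : mCard F M = n) :
    ∃ s t : ℕ, n = s * (p ^ e + 1) + t * p ^ (e - b) := by
  have hΔ : 0 < p ^ (e - b) := pow_pos hp.pos _
  have hΔq : p ^ (e - b) ∣ p ^ e := pow_dvd_pow p (by omega)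
  have hdim : finrank F (Fin v → F) = v := Module.finrank_fin_fun F
  refine main F (p ^ e) (p ^ (e - b)) hF hΔ hΔq n v (Fin v → F) M hdim ?_ ?_
  · rw [bridge1]
    exact hn
  · intro H hH
    rw [bridge1, bridge2]
    exact hdiv H hH


end
end

section
/- Let p be a prime, e ≥ 1, q = p^e, let b be an integer with 0 ≤ b ≤ e−1, and let n be a non-negative integer. Then there exist a length m and a p^{e−b}-divisible linear code over F_q of effective length n if and only if there exist non-negative integers s and t with n = s·(q+1) + t·p^{e−b}. -/
open Module Finset

noncomputable section
open scoped Classical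

variable (F : Type) [Field F] [Fintype F]

/-!
Write `Δ = p^(e-b)`, a divisor of `q`. Direct sums of codes add effective lengths, the
repetition code of length `Δ` and the two-dimensional simplex code of length `q + 1` are
`Δ`-divisible, so every `s(q + 1) + tΔ` occurs.

Conversely let `C` be `Δ`-divisible of effective length `n` and `r = n mod Δ`. Every codeword
has `n - wt ≡ r (mod Δ)` zeros on the support, hence at least `r`. If `n < q²`, counting pairs
gives `u, v ∈ C` without a common zero on the support; then the zero sets of `v` and of the
`u + a v` partition the support into `q + 1` parts, so `n ≥ r(q + 1)`, which also holds
trivially when `n ≥ q²`. As `n - r(q + 1) ≡ -rq ≡ 0 (mod Δ)`, this is the claimed form.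
-/

lemma Nat.exists_eq_mul_add_mul_of_mod_mul_le {n Δ q : ℕ} (hΔ : Δ ∣ q)
    (h : n % Δ * (q + 1) ≤ n) : ∃ s t, n = s * (q + 1) + t * Δ := by
  have hdvd : Δ ∣ n - n % Δ * (q + 1) := by
    have : n - n % Δ * (q + 1) = n - n % Δ - n % Δ * q := by
      rw [mul_add, mul_one, Nat.sub_sub, add_comm]
    rw [this]
    exact Nat.dvd_sub (Nat.dvd_sub_mod n) (hΔ.mul_left _)
  exact ⟨n % Δ, (n - n % Δ * (q + 1)) / Δ, by rw [Nat.div_mul_cancel hdvd]; omega⟩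

namespace DivisibleCode

section Hamming

variable {ι κ β : Type*} [Fintype ι] [Fintype κ] [Zero β] [DecidableEq β]

lemma hammingNorm_comp_equiv (x : ι → β) (σ : κ ≃ ι) : hammingNorm (x ∘ σ) = hammingNorm x := by
  simp only [hammingNorm, Finset.card_filter, Function.comp_apply]
  exact σ.sum_comp fun i => if x i ≠ 0 then 1 else 0

lemma hammingNorm_sum (x : ι ⊕ κ → β) :
    hammingNorm x = hammingNorm (x ∘ Sum.inl) + hammingNorm (x ∘ Sum.inr) := by
  simp only [hammingNorm, Finset.card_filter, Fintype.sum_sum_type, Function.comp_apply]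

lemma hammingNorm_add_card_zeros (x : ι → β) :
    hammingNorm x + #{i | x i = 0} = Fintype.card ι := by
  rw [hammingNorm, add_comm, Finset.card_filter_add_card_filter_not, Finset.card_univ]

end Hamming

variable {F : Type} [Field F]

lemma ite_add_card_eq_one [Fintype F] {x y : F} (h : x = 0 → y ≠ 0) :
    (if y = 0 then 1 else 0) + #{a : F | x + a * y = 0} = 1 := by
  by_cases hy : y = 0
  · simp [hy, h.mt (not_not.mpr hy)]
  · have : ({a : F | x + a * y = 0} : Finset F) = {-x / y} := by
      ext a
      simp only [Finset.mem_filter, Finset.mem_univ, true_and, Finset.mem_singleton]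
      rw [eq_div_iff hy]
      constructor <;> intro h' <;> linear_combination h'
    simp [hy, this]

lemma card_zeros_add_sum_card_zeros [Fintype F] {ι : Type*} {J : Finset ι} {u v : ι → F}
    (huv : ∀ i ∈ J, u i = 0 → v i ≠ 0) :
    #{i ∈ J | v i = 0} + ∑ a : F, #{i ∈ J | (u + a • v) i = 0} = #J := by
  simp only [Finset.card_filter, Pi.add_apply, Pi.smul_apply, smul_eq_mul]
  rw [Finset.sum_comm, ← Finset.sum_add_distrib, Finset.card_eq_sum_ones]
  refine Finset.sum_congr rfl fun i hi => ?_
  simpa only [Finset.card_filter] using ite_add_card_eq_one (huv i hi)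

def directSum {ι κ : Type*} (C₁ : Submodule F (ι → F)) (C₂ : Submodule F (κ → F)) :
    Submodule F (ι ⊕ κ → F) :=
  (C₁.prod C₂).comap (LinearEquiv.sumArrowLequivProdArrow ι κ F F).toLinearMap

lemma mem_directSum {ι κ : Type*} {C₁ : Submodule F (ι → F)} {C₂ : Submodule F (κ → F)}
    {x : ι ⊕ κ → F} :
    x ∈ directSum C₁ C₂ ↔ x ∘ Sum.inl ∈ C₁ ∧ x ∘ Sum.inr ∈ C₂ :=
  Iff.rfl

variable {ι κ : Type*} [Fintype ι] [Fintype κ]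

def codeSupport (C : Submodule F (ι → F)) : Finset ι := {i | ∃ c ∈ C, c i ≠ 0}

lemma mem_codeSupport {C : Submodule F (ι → F)} {i : ι} :
    i ∈ codeSupport C ↔ ∃ c ∈ C, c i ≠ 0 := by
  simp [codeSupport]

lemma card_codeSupport (C : Submodule F (ι → F)) :
    #(codeSupport C) = Nat.card {i // ∃ c ∈ C, c i ≠ 0} := by
  rw [Nat.card_eq_fintype_card, Fintype.card_subtype, codeSupport]

lemma card_zeros_add_hammingNorm {C : Submodule F (ι → F)} {w : ι → F} (hw : w ∈ C) :
    #{i ∈ codeSupport C | w i = 0} + hammingNorm w = #(codeSupport C) := by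
  have hsupp : hammingNorm w = #{i ∈ codeSupport C | w i ≠ 0} := by
    rw [hammingNorm]
    congr 1
    ext i
    simpa [mem_codeSupport] using fun h => ⟨w, hw, h⟩
  rw [hsupp, Finset.card_filter_add_card_filter_not]

lemma mod_le_card_zeros {Δ : ℕ} {C : Submodule F (ι → F)} (hdiv : ∀ c ∈ C, Δ ∣ hammingNorm c)
    {w : ι → F} (hw : w ∈ C) :
    #(codeSupport C) % Δ ≤ #{i ∈ codeSupport C | w i = 0} := by
  obtain ⟨k, hk⟩ := hdiv w hw
  rw [← card_zeros_add_hammingNorm hw, hk, Nat.add_mul_mod_self_left]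
  exact Nat.mod_le _ _

lemma codeSupport_directSum (C₁ : Submodule F (ι → F)) (C₂ : Submodule F (κ → F)) :
    codeSupport (directSum C₁ C₂) = (codeSupport C₁).disjSum (codeSupport C₂) := by
  ext (a | b) <;> simp only [Finset.inl_mem_disjSum, Finset.inr_mem_disjSum, mem_codeSupport]
  · refine ⟨fun ⟨x, hx, hxa⟩ => ⟨_, (mem_directSum.mp hx).1, hxa⟩, fun ⟨c, hc, hca⟩ => ?_⟩
    exact ⟨Sum.elim c 0, mem_directSum.mpr ⟨hc, C₂.zero_mem⟩, hca⟩
  · refine ⟨fun ⟨x, hx, hxb⟩ => ⟨_, (mem_directSum.mp hx).2, hxb⟩, fun ⟨c, hc, hcb⟩ => ?_⟩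
    exact ⟨Sum.elim 0 c, mem_directSum.mpr ⟨C₁.zero_mem, hc⟩, hcb⟩

lemma exists_fin_code {Δ : ℕ} {D : Submodule F (ι → F)} (hdiv : ∀ c ∈ D, Δ ∣ hammingNorm c) :
    ∃ (m : ℕ) (C : Submodule F (Fin m → F)),
      IsDivisibleCode F Δ C ∧ effLength F C = #(codeSupport D) := by
  let e := Fintype.equivFin ι
  refine ⟨_, D.comap (LinearMap.funLeft F F e), fun c hc => ?_, ?_⟩
  · rw [← hammingNorm_comp_equiv c e.symm.symm]
    exact hdiv _ hc
  · rw [effLength, ← card_codeSupport]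
    refine Finset.card_equiv e.symm fun j => ?_
    simp only [mem_codeSupport, Submodule.mem_comap]
    constructor
    · rintro ⟨c, hc, hcj⟩
      exact ⟨_, hc, by simpa using hcj⟩
    · rintro ⟨d, hd, hdj⟩
      exact ⟨d ∘ e.symm, by convert hd; ext; simp [LinearMap.funLeft_apply], by simpa using hdj⟩

variable (F) in
def divisibleCodeLengths (Δ : ℕ) : AddSubmonoid ℕ where
  carrier := {n | ∃ (m : ℕ) (C : Submodule F (Fin m → F)),
    IsDivisibleCode F Δ C ∧ effLength F C = n}
  zero_mem' := ⟨0, ⊥, fun c _ => by rw [Subsingleton.elim c 0, hammingNorm_zero]; exact dvd_zero Δ,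
    by simp [effLength]⟩
  add_mem' := by
    rintro _ _ ⟨m₁, C₁, hdiv₁, rfl⟩ ⟨m₂, C₂, hdiv₂, rfl⟩
    have hdiv : ∀ c ∈ directSum C₁ C₂, Δ ∣ hammingNorm c := fun c hc => by
      rw [hammingNorm_sum]
      exact dvd_add (hdiv₁ _ (mem_directSum.mp hc).1) (hdiv₂ _ (mem_directSum.mp hc).2)
    simpa only [effLength, ← card_codeSupport, codeSupport_directSum, Finset.card_disjSum,
      Set.mem_ofPred_eq] using exists_fin_code hdiv

lemma card_codeSupport_mem_divisibleCodeLengths {Δ : ℕ} {D : Submodule F (ι → F)}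
    (hdiv : ∀ c ∈ D, Δ ∣ hammingNorm c) : #(codeSupport D) ∈ divisibleCodeLengths F Δ :=
  exists_fin_code hdiv

lemma self_mem_divisibleCodeLengths (Δ : ℕ) : Δ ∈ divisibleCodeLengths F Δ := by
  have hsupp : codeSupport (Submodule.span F {(1 : Fin Δ → F)}) = Finset.univ :=
    Finset.eq_univ_of_forall fun i => mem_codeSupport.mpr
      ⟨1, Submodule.mem_span_singleton_self _, one_ne_zero⟩
  have hdiv : ∀ c ∈ Submodule.span F {(1 : Fin Δ → F)}, Δ ∣ hammingNorm c := fun c hc => by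
    obtain ⟨a, rfl⟩ := Submodule.mem_span_singleton.mp hc
    rcases eq_or_ne a 0 with rfl | ha
    · simp
    · simp [hammingNorm, ha]
  simpa [hsupp] using card_codeSupport_mem_divisibleCodeLengths hdiv

variable [Fintype F]

lemma card_mul_card_eval_eq_zero {C : Submodule F (ι → F)} {i : ι} (hi : i ∈ codeSupport C) :
    Fintype.card F * #{w : C | (w : ι → F) i = 0} = Fintype.card C := by
  obtain ⟨c, hc, hci⟩ := mem_codeSupport.mp hi
  let ev : C →+ F := (LinearMap.proj i ∘ₗ C.subtype).toAddMonoidHom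
  have hsurj : Function.Surjective ev := fun a =>
    ⟨(a * (c i)⁻¹) • ⟨c, hc⟩, by simp [ev, hci]⟩
  have hker : Nat.card ev.ker = #{w : C | (w : ι → F) i = 0} := by
    rw [← Fintype.card_subtype, ← Nat.card_eq_fintype_card]
    rfl
  have hindex : ev.ker.index = Fintype.card F := by
    rw [AddSubgroup.index_ker, AddMonoidHom.range_eq_top.mpr hsurj, AddSubgroup.card_top,
      Nat.card_eq_fintype_card]
  rw [← hker, ← hindex, mul_comm, AddSubgroup.card_mul_index, Nat.card_eq_fintype_card]

lemma exists_no_common_zero {C : Submodule F (ι → F)}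
    (hC : #(codeSupport C) < Fintype.card F * Fintype.card F) :
    ∃ u ∈ C, ∃ v ∈ C, ∀ i ∈ codeSupport C, u i = 0 → v i ≠ 0 := by
  set J := codeSupport C
  set q := Fintype.card F
  let K : ι → Finset C := fun i => {w : C | (w : ι → F) i = 0}
  -- Each coordinate of the support is a common zero of `1/q²` of all pairs of codewords.
  let bad : Finset (C × C) := {x | ∃ i ∈ J, (x.1 : ι → F) i = 0 ∧ (x.2 : ι → F) i = 0}
  have hbad : #bad ≤ ∑ i ∈ J, #(K i) * #(K i) := by
    calc #bad ≤ #(J.biUnion fun i => K i ×ˢ K i) := by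
          refine Finset.card_le_card fun x hx => ?_
          obtain ⟨i, hi, h₁, h₂⟩ := (Finset.mem_filter.mp hx).2
          exact Finset.mem_biUnion.mpr ⟨i, hi, by simp [K, h₁, h₂]⟩
      _ ≤ ∑ i ∈ J, #(K i ×ˢ K i) := Finset.card_biUnion_le
      _ = ∑ i ∈ J, #(K i) * #(K i) := by simp only [Finset.card_product]
  have hlt : q * q * #bad < q * q * (Fintype.card C * Fintype.card C) := by
    calc q * q * #bad ≤ ∑ i ∈ J, (q * #(K i)) * (q * #(K i)) := by
          refine le_trans (Nat.mul_le_mul_left _ hbad) (le_of_eq ?_)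
          rw [Finset.mul_sum]
          exact Finset.sum_congr rfl fun i _ => by ring
      _ = #J * (Fintype.card C * Fintype.card C) := by
          rw [Finset.sum_congr rfl fun i hi => by rw [card_mul_card_eval_eq_zero hi],
            Finset.sum_const, smul_eq_mul]
      _ < q * q * (Fintype.card C * Fintype.card C) :=
          Nat.mul_lt_mul_of_pos_right hC (by positivity)
  obtain ⟨⟨u, v⟩, -, huv⟩ := Finset.exists_mem_notMem_of_card_lt_card
    (s := bad) (t := Finset.univ) (by
      rw [Finset.card_univ, Fintype.card_prod]
      exact Nat.lt_of_mul_lt_mul_left hlt)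
  refine ⟨u, u.2, v, v.2, fun i hi hu hv => huv ?_⟩
  simpa [bad] using ⟨i, hi, hu, hv⟩

lemma mod_mul_card_add_one_le {Δ : ℕ} (hΔ : Δ ∣ Fintype.card F) {C : Submodule F (ι → F)}
    (hdiv : ∀ c ∈ C, Δ ∣ hammingNorm c) :
    #(codeSupport C) % Δ * (Fintype.card F + 1) ≤ #(codeSupport C) := by
  set n := #(codeSupport C)
  set q := Fintype.card F
  have hmod : n % Δ < q :=
    (Nat.mod_lt _ (Nat.pos_of_dvd_of_pos hΔ Fintype.card_pos)).trans_le
      (Nat.le_of_dvd Fintype.card_pos hΔ)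
  rcases le_or_gt (q * q) n with hn | hn
  · nlinarith
  -- The `q + 1` codewords `v` and `u + a • v` have disjoint zero sets covering the support.
  obtain ⟨u, hu, v, hv, huv⟩ := exists_no_common_zero hn
  calc n % Δ * (q + 1) = n % Δ + ∑ _a : F, n % Δ := by
        rw [Finset.sum_const, Finset.card_univ, smul_eq_mul]; ring
    _ ≤ #{i ∈ codeSupport C | v i = 0} + ∑ a : F, #{i ∈ codeSupport C | (u + a • v) i = 0} :=
        add_le_add (mod_le_card_zeros hdiv hv) (Finset.sum_le_sum fun a _ =>
          mod_le_card_zeros hdiv (C.add_mem hu (C.smul_mem a hv)))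
    _ = n := card_zeros_add_sum_card_zeros huv

lemma card_add_one_mem_divisibleCodeLengths {Δ : ℕ} (hΔ : Δ ∣ Fintype.card F) :
    Fintype.card F + 1 ∈ divisibleCodeLengths F Δ := by
  -- Coordinates are the points of the projective line `Option F`, and every nonzero
  -- codeword `a • g₁ + b • g₂` vanishes at exactly one of them.
  let g₁ : Option F → F := fun o => o.elim 1 id
  let g₂ : Option F → F := fun o => o.elim 0 fun _ => 1
  have hsupp : codeSupport (Submodule.span F {g₁, g₂}) = Finset.univ := by
    refine Finset.eq_univ_of_forall fun o => mem_codeSupport.mpr ?_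
    cases o with
    | none => exact ⟨g₁, Submodule.subset_span (by simp), by simp [g₁]⟩
    | some x => exact ⟨g₂, Submodule.subset_span (by simp), by simp [g₂]⟩
  have hzeros (a b : F) (hab : ¬(a = 0 ∧ b = 0)) : #{o | (a • g₁ + b • g₂) o = 0} = 1 := by
    rw [Finset.card_eq_one]
    by_cases ha : a = 0
    · refine ⟨none, Finset.eq_singleton_iff_unique_mem.mpr ⟨by simp [g₁, g₂, ha], ?_⟩⟩
      rintro (_ | x) hx
      · rfl
      · simp_all [g₁, g₂]
    · refine ⟨some (-b / a), Finset.eq_singleton_iff_unique_mem.mpr ⟨?_, ?_⟩⟩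
      · simp only [mem_filter, mem_univ, true_and, Pi.add_apply, Pi.smul_apply, smul_eq_mul,
          Option.elim_some, id_eq, mul_one, g₁, g₂]
        field_simp
        ring
      · rintro (_ | x) hx
        · simp_all [g₁, g₂]
        · simp only [mem_filter, mem_univ, true_and, Pi.add_apply, Pi.smul_apply, smul_eq_mul,
            Option.elim_some, id_eq, mul_one, g₁, g₂] at hx
          rw [Option.some_inj, eq_div_iff ha]
          linear_combination hx
  have hdiv : ∀ c ∈ Submodule.span F {g₁, g₂}, Δ ∣ hammingNorm c := fun c hc => by
    obtain ⟨a, b, rfl⟩ := Submodule.mem_span_pair.mp hc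
    by_cases hab : a = 0 ∧ b = 0
    · simp [hab.1, hab.2]
    · have := hammingNorm_add_card_zeros (a • g₁ + b • g₂)
      rw [hzeros a b hab, Fintype.card_option, add_left_inj] at this
      rwa [this]
  simpa [hsupp] using card_codeSupport_mem_divisibleCodeLengths hdiv

end DivisibleCode

theorem stmt_4 (p e b : ℕ) (hF : Fintype.card F = p ^ e) (n : ℕ) :
    (∃ (m : ℕ) (C : Submodule F (Fin m → F)),
        IsDivisibleCode F (p ^ (e - b)) C ∧ effLength F C = n) ↔
      ∃ s t : ℕ, n = s * (p ^ e + 1) + t * p ^ (e - b) := by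
  have hΔ : p ^ (e - b) ∣ Fintype.card F := hF ▸ pow_dvd_pow p (Nat.sub_le e b)
  constructor
  · rintro ⟨m, C, hdiv, rfl⟩
    rw [effLength, ← DivisibleCode.card_codeSupport, ← hF]
    exact Nat.exists_eq_mul_add_mul_of_mod_mul_le hΔ
      (DivisibleCode.mod_mul_card_add_one_le hΔ hdiv)
  · rintro ⟨s, t, rfl⟩
    have h := add_mem
      (nsmul_mem (DivisibleCode.card_add_one_mem_divisibleCodeLengths (F := F) hΔ) s)
      (nsmul_mem (DivisibleCode.self_mem_divisibleCodeLengths (F := F) (p ^ (e - b))) t)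
    rwa [hF, smul_eq_mul, smul_eq_mul] at h

end
end

section
/- Let p be a prime, e ≥ 1, q = p^e, and let a, b be natural numbers with a ≥ 1 and b ≤ e−1. Set g := a·p^{(a+1)e−b} − (q^{a+1}−1)/(q−1). Then g cannot be written as Σ_{i=0}^{a} c_i·s_q(a,b,i) with all c_i non-negative integers, while every integer m > g can be written in this form; i.e., g is the Frobenius number of s_q(a,b,0), …, s_q(a,b,a). -/
open Finset

/-!
Write `σ = 1 + q + ⋯ + q^(a+1)` and `P = p^(e-b)`. The generators for `(a + 1, b)` are `σ` together
with `P` times the generators for `(a, 0)`; moreover `σ ≡ 1 (mod P)` and `σ` lies in the semigroup `M`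
generated by the latter. Johnson's reduction: if `M` has Frobenius number `F`, then
`{k σ + P x | k ∈ ℕ, x ∈ M}` has Frobenius number `(P - 1) σ + P F`. Every larger `m` is reached with
`k = m mod P`, while a representation of `(P - 1) σ + P F` would force `k ≡ -1 (mod P)` and then
`F ∈ M`. Induction on `a`, starting from `ℕ` with Frobenius number `-1`, gives the formula.
-/

-- Over `ℤ` rather than Mathlib's `FrobeniusNumber` on `ℕ`: the base case has Frobenius number `-1`.
def IsFrobeniusNumber (S : Set ℤ) (g : ℤ) : Prop :=
  g ∉ S ∧ ∀ m, g < m → m ∈ S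

theorem IsFrobeniusNumber.adjoin_of_modEq_one {M : AddSubmonoid ℤ} {F P s : ℤ}
    (hF : IsFrobeniusNumber M F) (hP : 0 < P) (hs : 0 ≤ s) (hsM : s ∈ M)
    (hsP : s ≡ 1 [ZMOD P]) :
    IsFrobeniusNumber {m | ∃ k : ℕ, ∃ x ∈ M, m = k * s + P * x} ((P - 1) * s + P * F) := by
  refine ⟨?_, fun m hm => ?_⟩
  · rintro ⟨k, x, hx, hkx⟩
    have hdvd : P ∣ (k + 1 : ℤ) := by
      have hks : P ∣ (k + 1) * s := ⟨s + F - x, by linear_combination -hkx⟩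
      simpa using (dvd_add hks ((hsP.mul_left (k + 1 : ℤ)).dvd))
    obtain ⟨t, ht⟩ := hdvd
    obtain ⟨n, hn⟩ : ∃ n : ℕ, t - 1 = n := Int.eq_ofNat_of_zero_le (by nlinarith)
    have hFx : F = n • s + x := by
      rw [nsmul_eq_mul, ← hn]
      refine mul_left_cancel₀ hP.ne' ?_
      linear_combination hkx + s * ht
    exact hF.1 (hFx ▸ add_mem (AddSubmonoid.nsmul_mem M hsM n) hx)
  · obtain ⟨x, hx⟩ : P ∣ m - m % P * s :=
      ((hsP.mul_left (m % P)).trans (by simpa using Int.mod_modEq m P)).dvd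
    have hr : 0 ≤ m % P := Int.emod_nonneg m hP.ne'
    have hrP : m % P < P := Int.emod_lt_of_pos m hP
    refine ⟨(m % P).toNat, x, hF.2 x ?_, ?_⟩
    · nlinarith
    · rw [Int.toNat_of_nonneg hr]; linear_combination hx

def sQSubmonoid (p e a b : ℕ) : AddSubmonoid ℤ :=
  AddSubmonoid.closure (Set.range fun i : Fin (a + 1) => (sQ p e a b i : ℤ))

def frobeniusSQ (p e a b : ℕ) : ℤ :=
  (a : ℤ) * (p : ℤ) ^ ((a + 1) * e - b) - ∑ j ∈ range (a + 1), ((p : ℤ) ^ e) ^ j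

theorem mem_sQSubmonoid_iff {p e a b : ℕ} {m : ℤ} :
    m ∈ sQSubmonoid p e a b ↔ ∃ c : Fin (a + 1) → ℕ, m = ∑ i, (c i : ℤ) * (sQ p e a b i : ℤ) := by
  simp [sQSubmonoid, AddSubmonoid.mem_closure_range_iff_of_fintype]

theorem sQ_zero (p e a b : ℕ) : sQ p e a b 0 = ∑ j ∈ range (a + 1), (p ^ e) ^ j := by
  simp [sQ]

theorem sQ_self (p e a : ℕ) : sQ p e a 0 a = p ^ (a * e) := by
  rcases Nat.eq_zero_or_pos a with rfl | ha
  · simp [sQ]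
  · simp [sQ, ha.ne']

theorem sQ_succ_succ {p e b : ℕ} (a i : ℕ) (hb : b ≤ e) :
    sQ p e (a + 1) b (i + 1) = p ^ (e - b) * sQ p e a 0 i := by
  have hexp : (i + 1) * e - b = (e - b) + i * e := by
    rw [add_mul, one_mul, Nat.add_sub_assoc hb, add_comm]
  rcases Nat.eq_zero_or_pos i with rfl | hi
  · simp [sQ]
  · simp [sQ, hi.ne', hexp, pow_add, mul_assoc]

theorem sQ_zero_succ (p e a b : ℕ) :
    sQ p e (a + 1) b 0 = sQ p e a 0 0 + p ^ e * sQ p e a 0 a := by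
  rw [sQ_zero, sQ_zero, sQ_self, sum_range_succ]
  ring

theorem sQ_zero_modEq_one (p e a b : ℕ) : sQ p e a b 0 ≡ 1 [MOD p ^ e] := by
  rw [sQ_zero, sum_range_succ']
  simpa using ((Nat.modEq_zero_iff_dvd.2
    (dvd_sum fun j _ => dvd_pow_self (p ^ e) j.succ_ne_zero)).add_right 1)

theorem mem_sQSubmonoid_succ {p e a b : ℕ} {m : ℤ} (hb : b ≤ e) :
    m ∈ sQSubmonoid p e (a + 1) b ↔
      ∃ k : ℕ, ∃ x ∈ sQSubmonoid p e a 0,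
        m = k * (sQ p e (a + 1) b 0 : ℤ) + (p : ℤ) ^ (e - b) * x := by
  have hsplit (c : Fin (a + 2) → ℕ) : ∑ i, (c i : ℤ) * (sQ p e (a + 1) b i : ℤ) =
      c 0 * (sQ p e (a + 1) b 0 : ℤ) +
        (p : ℤ) ^ (e - b) * ∑ i : Fin (a + 1), (c i.succ : ℤ) * (sQ p e a 0 i : ℤ) := by
    rw [Fin.sum_univ_succ, mul_sum]
    simp only [Fin.val_succ, sQ_succ_succ a _ hb, Fin.val_zero]
    push_cast
    congr 1
    exact sum_congr rfl fun i _ => by ring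
  simp only [mem_sQSubmonoid_iff]
  constructor
  · rintro ⟨c, rfl⟩
    exact ⟨c 0, _, ⟨fun i => c i.succ, rfl⟩, hsplit c⟩
  · rintro ⟨k, _, ⟨c, rfl⟩, rfl⟩
    exact ⟨Fin.cons k c, by simp [hsplit]⟩

theorem frobeniusSQ_succ {p e b : ℕ} (a : ℕ) (hb : b ≤ e) :
    frobeniusSQ p e (a + 1) b =
      ((p : ℤ) ^ (e - b) - 1) * sQ p e (a + 1) b 0 + (p : ℤ) ^ (e - b) * frobeniusSQ p e a 0 := by
  have hexp : (a + 1 + 1) * e - b = (e - b) + (a + 1) * e := by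
    rw [add_mul _ 1, one_mul, Nat.add_sub_assoc hb, add_comm]
  simp only [frobeniusSQ, sQ_zero, hexp, pow_add, pow_mul, Nat.sub_zero, sum_range_succ _ (a + 1)]
  push_cast
  ring

theorem isFrobeniusNumber_sQSubmonoid {p e : ℕ} (hp : 0 < p) (a : ℕ) {b : ℕ} (hb : b ≤ e) :
    IsFrobeniusNumber (sQSubmonoid p e a b) (frobeniusSQ p e a b) := by
  induction a generalizing b with
  | zero =>
    have hmem (m : ℤ) : m ∈ sQSubmonoid p e 0 b ↔ 0 ≤ m := by
      simp only [mem_sQSubmonoid_iff, Nat.reduceAdd, univ_unique, Fin.default_eq_zero, sQ,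
        Fin.val_eq_zero, ↓reduceIte, zero_add, range_one, sum_singleton, pow_zero, Nat.cast_one, mul_one]
      exact ⟨by rintro ⟨c, rfl⟩; positivity, fun hm => ⟨fun _ => m.toNat, (Int.toNat_of_nonneg hm).symm⟩⟩
    have hF : frobeniusSQ p e 0 b = -1 := by simp [frobeniusSQ]
    simp only [IsFrobeniusNumber, hF, SetLike.mem_coe, hmem]
    exact ⟨by omega, fun _ _ => by omega⟩
  | succ a ih =>
    have hσ : (sQ p e (a + 1) b 0 : ℤ) ≡ 1 [ZMOD (p : ℤ) ^ (e - b)] := by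
      exact_mod_cast Int.natCast_modEq_iff.2
        ((sQ_zero_modEq_one p e (a + 1) b).of_dvd (pow_dvd_pow p (Nat.sub_le e b)))
    have hσM : (sQ p e (a + 1) b 0 : ℤ) ∈ sQSubmonoid p e a 0 := by
      have hgen (i : Fin (a + 1)) : (sQ p e a 0 i : ℤ) ∈ sQSubmonoid p e a 0 :=
        AddSubmonoid.subset_closure ⟨i, rfl⟩
      rw [sQ_zero_succ, Nat.cast_add, Nat.cast_mul, ← nsmul_eq_mul]
      simpa using add_mem (hgen 0) (AddSubmonoid.nsmul_mem _ (hgen (Fin.last a)) (p ^ e))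
    have hP : 0 < (p : ℤ) ^ (e - b) := by positivity
    convert (ih (Nat.zero_le e)).adjoin_of_modEq_one hP (Nat.cast_nonneg _) hσM hσ using 1
    · ext m
      exact mem_sQSubmonoid_succ hb
    · exact frobeniusSQ_succ a hb

theorem stmt_5_general (p e a b : ℕ) (hp : p.Prime) (hb : b ≤ e - 1)
    (g : ℤ)
    (hg : g = (a : ℤ) * (p : ℤ) ^ ((a + 1) * e - b) -
      ∑ j ∈ Finset.range (a + 1), ((p : ℤ) ^ e) ^ j) :
    (¬ ∃ c : Fin (a + 1) → ℕ, g = ∑ i : Fin (a + 1), (c i : ℤ) * (sQ p e a b i : ℤ)) ∧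
    ∀ m : ℤ, g < m → ∃ c : Fin (a + 1) → ℕ,
      m = ∑ i : Fin (a + 1), (c i : ℤ) * (sQ p e a b i : ℤ) := by
  have h := isFrobeniusNumber_sQSubmonoid hp.pos a (e := e) (b := b) (by omega)
  simp only [IsFrobeniusNumber, SetLike.mem_coe, mem_sQSubmonoid_iff] at h
  exact hg ▸ h

/-- The Frobenius number of `s_q(a,b,0),…,s_q(a,b,a)` is
`g = a·p^{(a+1)e-b} − (q^{a+1}−1)/(q−1)`: it is not a non-negative integer combination of the
`s_q(a,b,i)`, while every larger integer is. -/
theorem stmt_5 (p e a b : ℕ) (hp : p.Prime) (he : 1 ≤ e) (ha : 1 ≤ a) (hb : b ≤ e - 1)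
    (g : ℤ)
    (hg : g = (a : ℤ) * (p : ℤ) ^ ((a + 1) * e - b) -
      ∑ j ∈ Finset.range (a + 1), ((p : ℤ) ^ e) ^ j) :
    (¬ ∃ c : Fin (a + 1) → ℕ, g = ∑ i : Fin (a + 1), (c i : ℤ) * (sQ p e a b i : ℤ)) ∧
    ∀ m : ℤ, g < m → ∃ c : Fin (a + 1) → ℕ,
      m = ∑ i : Fin (a + 1), (c i : ℤ) * (sQ p e a b i : ℤ) :=
  stmt_5_general p e a b hp hb g hg
end

section
/- Let p be a prime, let F be a finite field with p^e elements, and let K be a subfield of F with p^f elements, where 1 ≤ f < e. Let u ≥ 3 be an integer with uf ≥ e, and let B be the set of points of PG(u−1, F) = PG(u−1, p^e) that admit a nonzero representative vector in F^u all of whose coordinates lie in K. Then B has cardinality (p^{fu}−1)/(p^f−1) and B is p^{uf−e}-divisible. -/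
open Module Finset

noncomputable section
open scoped Classical

variable (F : Type) [Field F] [Fintype F]

/-! The points of `B` lying in a subspace `S ≤ F^u` are the image of the projective space of
the `K`-subspace `W = S ∩ K^u`, and this map is injective because the ratio of two proportional
nonzero vectors of `K^u` lies in `K`. Hence `|B ∩ S| = 1 + q + ⋯ + q^(k-1)` with `q = |K| = p^f`
and `k = dim_K W`. For a hyperplane `H`, `K^u / W` embeds into `F^u / H`, which has `p^e`
elements, so `q^(u-k) ≤ p^e`. Therefore `|B| - |B ∩ H| = q^k (1 + q + ⋯ + q^(u-k-1))` is divisible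
by `p^(fk)`, and `fk ≥ uf - e`. -/

namespace Subfield

variable {L : Type*} [Field L] (K : Subfield L) (ι : Type*)

def piInclusion : (ι → K) →ₛₗ[K.subtype] (ι → L) where
  toFun y i := y i
  map_add' _ _ := rfl
  map_smul' _ _ := rfl

variable {K ι}

theorem piInclusion_injective : Function.Injective (K.piInclusion ι) :=
  fun _ _ h => funext fun i => Subtype.ext (congrFun h i)

theorem mem_of_smul_piInclusion_eq {a : L} {v w : ι → K} (hw : w ≠ 0)
    (h : a • K.piInclusion ι w = K.piInclusion ι v) : a ∈ K := by
  obtain ⟨i, hi⟩ := Function.ne_iff.1 hw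
  have hwi : (w i : L) ≠ 0 := by simpa using hi
  have hai : a * w i = v i := congrFun h i
  rw [← eq_div_iff hwi] at hai
  exact hai ▸ K.div_mem (v i).2 (w i).2

theorem card_pow_finrank_quotient_comap_le [Finite L] [Finite ι] (S : Submodule L (ι → L)) :
    Nat.card K ^ finrank K ((ι → K) ⧸ S.comap (K.piInclusion ι)) ≤ Nat.card ((ι → L) ⧸ S) := by
  have : Finite ((ι → L) ⧸ S) := Finite.of_surjective _ (Submodule.Quotient.mk_surjective S)
  rw [← Module.natCard_eq_pow_finrank (K := K)]
  refine Nat.card_le_card_of_injective (Submodule.mapQ _ S (K.piInclusion ι) le_rfl)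
    (LinearMap.ker_eq_bot.1 ?_)
  exact (Submodule.ker_mapQ _ _ _ _).trans (Submodule.mkQ_map_self _)

variable (W : Submodule K (ι → K))

theorem piInclusion_comp_subtype_injective :
    Function.Injective (K.piInclusion ι ∘ₛₗ W.subtype) :=
  piInclusion_injective.comp W.subtype_injective

theorem map_piInclusion_injective :
    Function.Injective (Projectivization.map _ (piInclusion_comp_subtype_injective W)) := by
  intro P Q h
  induction P using Projectivization.ind with | h v hv =>
  induction Q using Projectivization.ind with | h w hw =>
  simp only [Projectivization.map_mk, Projectivization.mk_eq_mk_iff'] at h ⊢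
  obtain ⟨a, ha⟩ := h
  have hw' : (w : ι → K) ≠ 0 := by simpa using hw
  refine ⟨⟨a, mem_of_smul_piInclusion_eq hw' ha⟩, W.subtype_injective ?_⟩
  exact piInclusion_injective ha

end Subfield

section Subgeometry

variable {L : Type} [Field L] (K : Subfield L) {u : ℕ}

def subgeometryPoints (u : ℕ) : Set (PGPoint L u) :=
  {P | ∃ x : Fin u → L, x ≠ 0 ∧ x ∈ P.1 ∧ ∀ i, x i ∈ K}

def subgeometryEmbedding (S : Submodule L (Fin u → L)) :
    Projectivization K (S.comap (K.piInclusion (Fin u))) → PGPoint L u :=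
  Projectivization.equivSubmodule L (Fin u → L) ∘
    Projectivization.map _ (K.piInclusion_comp_subtype_injective _)

variable {K}

theorem subgeometryEmbedding_mk (S : Submodule L (Fin u → L))
    (w : S.comap (K.piInclusion (Fin u))) (hw : w ≠ 0) :
    (subgeometryEmbedding K S (Projectivization.mk K w hw)).1 =
      L ∙ K.piInclusion (Fin u) w :=
  rfl

theorem subgeometryEmbedding_injective (S : Submodule L (Fin u → L)) :
    Function.Injective (subgeometryEmbedding K S) :=
  (Projectivization.equivSubmodule L _).injective.comp (Subfield.map_piInclusion_injective _)

theorem PGPoint.span_singleton_eq_of_mem {P : PGPoint L u} {x : Fin u → L} (hx : x ≠ 0)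
    (hxP : x ∈ P.1) : L ∙ x = P.1 :=
  Submodule.eq_of_le_of_finrank_eq ((Submodule.span_singleton_le_iff_mem _ _).2 hxP)
    (by rw [finrank_span_singleton hx, P.2])

theorem range_subgeometryEmbedding (S : Submodule L (Fin u → L)) :
    Set.range (subgeometryEmbedding K S) = subgeometryPoints K u ∩ {P | P.1 ≤ S} := by
  ext P
  constructor
  · rintro ⟨Q, rfl⟩
    induction Q using Projectivization.ind with | h w hw =>
    have hw' : K.piInclusion (Fin u) w ≠ 0 := by
      simpa using (K.piInclusion_comp_subtype_injective _).ne hw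
    rw [Set.mem_inter_iff, Set.mem_ofPred_eq, subgeometryEmbedding_mk,
      Submodule.span_singleton_le_iff_mem]
    exact ⟨⟨_, hw', Submodule.mem_span_singleton_self _, fun i => (w.1 i).2⟩, w.2⟩
  · rintro ⟨⟨x, hx, hxP, hxK⟩, hPS⟩
    let y : Fin u → K := fun i => ⟨x i, hxK i⟩
    have hyx : K.piInclusion (Fin u) y = x := rfl
    have hy : (⟨y, show _ ∈ S from hyx ▸ hPS hxP⟩ : S.comap (K.piInclusion (Fin u))) ≠ 0 := by
      intro h
      exact hx (hyx ▸ by simpa using congrArg (K.piInclusion (Fin u) ∘ Subtype.val) h)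
    refine ⟨Projectivization.mk K _ hy, Subtype.ext ?_⟩
    rw [subgeometryEmbedding_mk]
    exact PGPoint.span_singleton_eq_of_mem hx hxP

theorem ncard_subgeometryPoints_inter_le [Finite K] (S : Submodule L (Fin u → L)) :
    (subgeometryPoints K u ∩ {P | P.1 ≤ S}).ncard =
      ∑ j ∈ range (finrank K (S.comap (K.piInclusion (Fin u)))), Nat.card K ^ j := by
  rw [← range_subgeometryEmbedding, Set.ncard_range_of_injective
    (subgeometryEmbedding_injective S), Projectivization.card_of_finrank K _ rfl]

theorem ncard_subgeometryPoints [Finite K] :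
    (subgeometryPoints K u).ncard = ∑ j ∈ range u, Nat.card K ^ j := by
  have h := ncard_subgeometryPoints_inter_le (K := K) (u := u) ⊤
  rw [Submodule.comap_top, finrank_top, Module.finrank_fin_fun] at h
  simpa using h

end Subgeometry

theorem natCard_quotient_le_of_finrank_eq_sub_one {L : Type*} [Field L] [Finite L] {u : ℕ}
    (H : Submodule L (Fin u → L)) (hH : finrank L H = u - 1) :
    Nat.card ((Fin u → L) ⧸ H) ≤ Nat.card L := by
  have hrank := H.finrank_quotient_add_finrank
  rw [hH, Module.finrank_fin_fun] at hrank
  rw [Module.natCard_eq_pow_finrank (K := L)]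
  calc Nat.card L ^ finrank L ((Fin u → L) ⧸ H) ≤ Nat.card L ^ 1 :=
        Nat.pow_le_pow_right Nat.card_pos (by omega)
    _ = Nat.card L := pow_one _

theorem Nat.sum_range_pow_modEq_of_le {q k n : ℕ} (h : k ≤ n) :
    ∑ j ∈ range n, q ^ j ≡ ∑ j ∈ range k, q ^ j [MOD q ^ k] := by
  obtain ⟨r, rfl⟩ := Nat.exists_eq_add_of_le h
  simp_rw [Finset.sum_range_add, pow_add, ← Finset.mul_sum]
  exact Nat.add_mul_mod_self_left _ _ _

theorem stmt_7 (p e f : ℕ)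
    (hF : Fintype.card F = p ^ e) (K : Subfield F) (hK : Fintype.card K = p ^ f)
    (u : ℕ) (hue : e ≤ u * f)
    (B : Set (PGPoint F u))
    (hB : B = {P : PGPoint F u |
      ∃ x : Fin u → F, x ≠ 0 ∧ x ∈ P.1 ∧ ∀ i : Fin u, x i ∈ K}) :
    B.ncard = ∑ j ∈ Finset.range u, (p ^ f) ^ j ∧
    IsDivisibleSet F (p ^ (u * f - e)) B := by
  obtain rfl : B = subgeometryPoints K u := hB
  have hKcard : Nat.card K = p ^ f := by rw [Nat.card_eq_fintype_card, hK]
  refine ⟨hKcard ▸ ncard_subgeometryPoints, fun H hH => ?_⟩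
  set W := H.comap (K.piInclusion (Fin u))
  set r := finrank K ((Fin u → K) ⧸ W)
  set k := finrank K W
  have hrank : r + k = u := by
    rw [Submodule.finrank_quotient_add_finrank, Module.finrank_fin_fun]
  have hp : 1 < p := lt_of_pow_lt_pow_left₀ e (Nat.zero_le p)
    (by rw [one_pow, ← hF]; exact Fintype.one_lt_card)
  have hcodim : f * r ≤ e := by
    rw [← Nat.pow_le_pow_iff_right hp, pow_mul, ← hKcard, ← hF, ← Nat.card_eq_fintype_card]
    exact (K.card_pow_finrank_quotient_comap_le H).trans
      (natCard_quotient_le_of_finrank_eq_sub_one H hH)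
  have hdvd : p ^ (u * f - e) ∣ (p ^ f) ^ k := by
    rw [← pow_mul]
    refine pow_dvd_pow p ?_
    have hsplit : (r + k) * f = f * r + f * k := by ring
    rw [hrank] at hsplit
    omega
  rw [ncard_subgeometryPoints, ncard_subgeometryPoints_inter_le, hKcard]
  exact (Nat.sum_range_pow_modEq_of_le (by omega)).of_dvd hdvd

end
end

section
/- Let n ≥ 1 be an integer. There exist a dimension v and a 2-divisible set of points S in PG(v−1,4) with |S| = n if and only if n ≥ 5. (Equivalently, a 2-divisible projective linear code over F_4 of effective length n exists if and only if n ≥ 5.) -/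
open Module Finset

noncomputable section
open scoped Classical

variable (F : Type) [Field F] [Fintype F]

/-! A nonempty 2-divisible set `S` of points over `𝔽_q`, `q` even, has more than `q` points.
Fewer than `q` proper subspaces never cover a vector space over `𝔽_q`; applied to the
annihilators of points in the dual space, this yields a hyperplane containing no point of `S`
if `|S|` is odd and `|S| < q`, and one containing exactly one point of `S` if `|S|` is even and
`|S| ≤ q`, both against `|S| ≡ |S ∩ H| (mod 2)`.

Conversely, let nonzero vectors `x i` span distinct points and satisfy
`∑ i, x i j ^ 2 * x i k = 0`. For a functional `f`, the number of `i` with `f (x i) ≠ 0` equals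
`∑ i, f (x i) ^ 3` in `𝔽₄`, and since squaring is additive in characteristic 2 this cube sum
expands into the sums above; so every hyperplane misses an even number of the points. Such
families of sizes `5, …, 9` exist (a line, a hyperoval, a Baer subplane, the affine space
`AG(3, 2)`, a triangle without its vertices), and direct sums give all larger sizes. -/

section FiniteField

variable {K : Type*} [Field K] [Fintype K]

theorem FiniteField.natCast_card_filter_ne_zero {ι : Type*} [Fintype ι] (c : ι → K) :
    (#{i | c i ≠ 0} : K) = ∑ i, c i ^ (Fintype.card K - 1) := by
  rw [Finset.natCast_card_filter]
  refine Finset.sum_congr rfl fun i _ => ?_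
  by_cases hc : c i = 0
  · simp [hc, Nat.sub_ne_zero_of_lt Fintype.one_lt_card]
  · simp [hc, FiniteField.pow_card_sub_one_eq_one _ hc]

theorem charP_two_of_card_eq_four (hK : Fintype.card K = 4) : CharP K 2 :=
  ringChar.of_eq (FiniteField.even_card_iff_char_two.mpr (by rw [hK]))

theorem sum_units_pow_of_card_eq_four (hK : Fintype.card K = 4) (e : ℕ) :
    ∑ u : Kˣ, (u : K) ^ e = if 3 ∣ e then 1 else 0 := by
  have := charP_two_of_card_eq_four hK
  rw [FiniteField.sum_pow_units, hK]
  simp [CharTwo.neg_eq]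

theorem sum_units_of_card_eq_four (hK : Fintype.card K = 4) : ∑ u : Kˣ, (u : K) = 0 := by
  simpa using sum_units_pow_of_card_eq_four hK 1

theorem natCast_card_units_of_card_eq_four (hK : Fintype.card K = 4) :
    (Fintype.card Kˣ : K) = 1 := by
  simpa using sum_units_pow_of_card_eq_four hK 0

end FiniteField

section Dual

variable {K V : Type*} [Field K] [AddCommGroup V] [Module K V]

theorem Module.Dual.exists_forall_mem_ne_zero_of_card_lt [Fintype K] {ι : Type*}
    (p : Submodule K V) (s : Finset ι) (f : ι → Dual K V) (h : ∀ i ∈ s, ∃ x ∈ p, f i x ≠ 0)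
    (hs : s.card < Fintype.card K) : ∃ x ∈ p, ∀ i ∈ s, f i x ≠ 0 := by
  let q : s → Submodule K p := fun i => LinearMap.ker ((f i).domRestrict p)
  have hq : ∀ i, q i ≠ ⊤ := fun i htop => by
    obtain ⟨x, hxp, hx⟩ := h i i.2
    exact hx (LinearMap.mem_ker.mp (htop ▸ Submodule.mem_top : (⟨x, hxp⟩ : p) ∈ q i))
  obtain ⟨⟨x, hxp⟩, hx⟩ := Set.ne_univ_iff_exists_notMem _ |>.mp <| Set.ssubset_univ_iff.mp <|
    Submodule.iUnion_ssubset_of_forall_ne_top_of_card_lt univ q hq (by simpa using hs)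
  simp only [Set.mem_iUnion, not_exists] at hx
  exact ⟨x, hxp, fun i hi => by simpa [q] using hx ⟨i, hi⟩⟩

theorem Module.Dual.exists_le_ker_forall_not_le [Fintype K] {ι : Type*} (W : Submodule K V)
    (s : Finset ι) (P : ι → Submodule K V) (hP : ∀ i ∈ s, ¬P i ≤ W)
    (hs : s.card < Fintype.card K) :
    ∃ f : Dual K V, W ≤ LinearMap.ker f ∧ ∀ i ∈ s, ¬P i ≤ LinearMap.ker f := by
  choose! x hxP hxW using fun i hi => SetLike.not_le_iff_exists.mp (hP i hi)
  obtain ⟨f, hfW, hf⟩ := exists_forall_mem_ne_zero_of_card_lt W.dualAnnihilator s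
    (fun i => Dual.eval K V (x i)) (fun i hi => by
      obtain ⟨f, hf, hWf⟩ := W.exists_le_ker_of_notMem (hxW i hi)
      exact ⟨f, (W.mem_dualAnnihilator f).mpr fun w hw => hWf hw, hf⟩) hs
  exact ⟨f, fun w hw => (W.mem_dualAnnihilator f).mp hfW w hw,
    fun i hi hle => hf i hi (hle (hxP i hi))⟩

theorem Submodule.exists_eq_ker_of_finrank_eq [FiniteDimensional K V] (H : Submodule K V)
    (hH : finrank K H = finrank K V - 1) : ∃ f : Dual K V, H = LinearMap.ker f := by
  rcases eq_or_ne H ⊤ with rfl | hne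
  · exact ⟨0, LinearMap.ker_zero.symm⟩
  obtain ⟨f, hf, hle⟩ := H.exists_le_ker_of_lt_top hne.lt_top
  refine ⟨f, Submodule.eq_of_le_of_finrank_eq hle ?_⟩
  have := Module.Dual.finrank_ker_add_one_of_ne_zero hf
  omega

end Dual

section PointSets

variable {K : Type} [Field K] {v : ℕ}

theorem PGPoint.eq_of_le {P Q : PGPoint K v} (h : P.1 ≤ Q.1) : P = Q :=
  Subtype.ext (Submodule.eq_of_le_of_finrank_eq h (P.2.trans Q.2.symm))

theorem PGPoint.not_le_bot (P : PGPoint K v) : ¬P.1 ≤ ⊥ := fun h =>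
  one_ne_zero (P.2.symm.trans (Submodule.finrank_eq_zero.mpr (le_bot_iff.mp h)))

variable [Fintype K]

theorem exists_hyperplane_le_forall_not_le (W : Submodule K (Fin v → K))
    (T : Set (PGPoint K v)) (hT : T.Nonempty) (hW : ∀ P ∈ T, ¬P.1 ≤ W)
    (hcard : T.ncard < Fintype.card K) :
    ∃ H : Submodule K (Fin v → K), finrank K H = v - 1 ∧ W ≤ H ∧ ∀ P ∈ T, ¬P.1 ≤ H := by
  obtain ⟨f, hWf, hf⟩ := Module.Dual.exists_le_ker_forall_not_le W T.toFinset Subtype.val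
    (by simpa using hW) (by rwa [← Set.ncard_eq_toFinset_card'])
  have hf0 : f ≠ 0 := by
    rintro rfl
    obtain ⟨P, hP⟩ := hT
    exact hf P (by simpa using hP) (by simp)
  refine ⟨LinearMap.ker f, ?_, hWf, fun P hP => hf P (by simpa using hP)⟩
  have := Module.Dual.finrank_ker_add_one_of_ne_zero hf0
  rw [Module.finrank_fin_fun] at this
  omega

theorem IsDivisibleSet.card_le_ncard_of_odd {S : Set (PGPoint K v)} (hS : IsDivisibleSet K 2 S)
    (hodd : Odd S.ncard) : Fintype.card K ≤ S.ncard := by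
  by_contra! hlt
  obtain ⟨H, hH, -, hSH⟩ := exists_hyperplane_le_forall_not_le ⊥ S
    (Set.nonempty_of_ncard_ne_zero hodd.pos.ne') (fun P _ => P.not_le_bot) hlt
  have hempty : S ∩ {P | P.1 ≤ H} = ∅ :=
    Set.eq_empty_of_forall_notMem fun P hP => hSH P hP.1 hP.2
  have hmod := hS H hH
  rw [hempty, Set.ncard_empty] at hmod
  exact Nat.not_even_iff_odd.mpr hodd (Nat.even_iff.mpr hmod)

theorem IsDivisibleSet.card_lt_ncard_of_even {S : Set (PGPoint K v)}
    (hS : IsDivisibleSet K 2 S) (heven : Even S.ncard) (hne : S.ncard ≠ 0) :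
    Fintype.card K < S.ncard := by
  by_contra! hle
  obtain ⟨P₀, hP₀⟩ := Set.nonempty_of_ncard_ne_zero hne
  have hcard : (S \ {P₀}).ncard = S.ncard - 1 := Set.ncard_sdiff_singleton_of_mem hP₀
  obtain ⟨H, hH, hP₀H, hSH⟩ := exists_hyperplane_le_forall_not_le P₀.1 (S \ {P₀})
    (Set.nonempty_of_ncard_ne_zero (by obtain ⟨k, hk⟩ := heven; omega))
    (fun P hP hle => hP.2 (PGPoint.eq_of_le hle)) (by omega)
  have hsingleton : S ∩ {P | P.1 ≤ H} = {P₀} := by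
    refine Set.eq_singleton_iff_unique_mem.mpr ⟨⟨hP₀, hP₀H⟩, fun P hP => ?_⟩
    by_contra hP₀'
    exact hSH P ⟨hP.1, hP₀'⟩ hP.2
  have hmod := hS H hH
  rw [hsingleton, Set.ncard_singleton] at hmod
  exact Nat.not_even_iff_odd.mpr (Nat.odd_iff.mpr hmod) heven

theorem IsDivisibleSet.card_lt_ncard {S : Set (PGPoint K v)} (hK : Even (Fintype.card K))
    (hS : IsDivisibleSet K 2 S) (hne : S.ncard ≠ 0) : Fintype.card K < S.ncard := by
  rcases Nat.even_or_odd S.ncard with heven | hodd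
  · exact hS.card_lt_ncard_of_even heven hne
  · exact (hS.card_le_ncard_of_odd hodd).lt_of_ne fun h =>
      Nat.not_even_iff_odd.mpr hodd (h ▸ hK)

end PointSets

section SelfOrthogonal

variable {K : Type*} [Field K] {ι : Type*} [Fintype ι] {v : ℕ}

/-- The `x i` are the columns of a generator matrix of a projective code; over `𝔽₄`, where
`a ^ 2` is the conjugate of `a`, the last field says that this code is Hermitian
self-orthogonal. -/
structure IsProjectiveSelfOrthogonal (x : ι → Fin v → K) : Prop where
  ne_zero : ∀ i, x i ≠ 0
  eq_of_smul_eq : ∀ i j (c : K), c • x i = x j → i = j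
  sum_sq_mul_eq_zero : ∀ j k, ∑ i, x i j ^ 2 * x i k = 0

theorem even_card_apply_ne_zero [Fintype K] (hK : Fintype.card K = 4) {x : ι → Fin v → K}
    (hx : ∀ j k, ∑ i, x i j ^ 2 * x i k = 0) (f : Module.Dual K (Fin v → K)) :
    Even #{i | f (x i) ≠ 0} := by
  have := charP_two_of_card_eq_four hK
  set b : Fin v → K := fun j => f fun k => if j = k then 1 else 0
  have hcube : ∀ i, f (x i) ^ 3 = ∑ j, ∑ k, b j ^ 2 * b k * (x i j ^ 2 * x i k) := fun i => by
    rw [LinearMap.pi_apply_eq_sum_univ f (x i), pow_succ, CharTwo.sum_sq, Finset.sum_mul_sum]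
    simp only [smul_eq_mul, mul_pow]
    exact Finset.sum_congr rfl fun j _ => Finset.sum_congr rfl fun k _ => by ring
  have hcast : (#{i | f (x i) ≠ 0} : K) = 0 := by
    rw [FiniteField.natCast_card_filter_ne_zero, hK]
    simp only [Nat.reduceSub, hcube]
    rw [Finset.sum_comm]
    refine Finset.sum_eq_zero fun j _ => ?_
    rw [Finset.sum_comm]
    simp [← Finset.mul_sum, hx]
  exact even_iff_two_dvd.mpr ((CharP.cast_eq_zero_iff K 2 _).mp hcast)

theorem IsProjectiveSelfOrthogonal.append {κ : Type*} [Fintype κ] {w : ℕ}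
    {x : ι → Fin v → K} {y : κ → Fin w → K}
    (hx : IsProjectiveSelfOrthogonal x) (hy : IsProjectiveSelfOrthogonal y) :
    IsProjectiveSelfOrthogonal
      (Sum.elim (fun i => Fin.append (x i) 0) (fun j => Fin.append 0 (y j))) := by
  refine ⟨?_, ?_, ?_⟩
  · rintro (i | j) h
    · exact hx.ne_zero i (funext fun k => by simpa using congrFun h (Fin.castAdd w k))
    · exact hy.ne_zero j (funext fun k => by simpa using congrFun h (Fin.natAdd v k))
  · rintro (i | j) (i' | j') c h
    · exact congrArg Sum.inl (hx.eq_of_smul_eq i i' c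
        (funext fun k => by simpa using congrFun h (Fin.castAdd w k)))
    · exact (hy.ne_zero j'
        (funext fun k => by simpa using (congrFun h (Fin.natAdd v k)).symm)).elim
    · exact (hx.ne_zero i'
        (funext fun k => by simpa using (congrFun h (Fin.castAdd w k)).symm)).elim
    · exact congrArg Sum.inr (hy.eq_of_smul_eq j j' c
        (funext fun k => by simpa using congrFun h (Fin.natAdd v k)))
  · intro j k
    refine Fin.addCases (fun j => ?_) (fun j => ?_) j <;>
      refine Fin.addCases (fun k => ?_) (fun k => ?_) k <;>
      simp [Fintype.sum_sum_type, hx.sum_sq_mul_eq_zero, hy.sum_sq_mul_eq_zero]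

def HasLeadingOne (y : Fin v → K) : Prop := ∃ j, y j = 1 ∧ ∀ k < j, y k = 0

theorem HasLeadingOne.ne_zero {y : Fin v → K} (hy : HasLeadingOne y) : y ≠ 0 := by
  obtain ⟨j, hj, -⟩ := hy
  rintro rfl
  exact zero_ne_one hj

theorem HasLeadingOne.eq_of_smul_eq {y z : Fin v → K} (hy : HasLeadingOne y)
    (hz : HasLeadingOne z) {c : K} (h : c • y = z) : y = z := by
  obtain ⟨j, hj, hj'⟩ := hy
  obtain ⟨l, hl, hl'⟩ := hz
  have hc : ∀ k, c * y k = z k := fun k => congrFun h k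
  rcases lt_trichotomy j l with hjl | rfl | hlj
  · have hc0 : c = 0 := by simpa [hj, hl' j hjl] using hc j
    simpa [hc0, hl] using hc l
  · have hc1 : c = 1 := by simpa [hj, hl] using hc j
    rwa [hc1, one_smul] at h
  · simpa [hj' l hlj, hl] using hc l

theorem HasLeadingOne.cons_zero {y : Fin v → K} (hy : HasLeadingOne y) :
    HasLeadingOne (Fin.cons 0 y : Fin (v + 1) → K) := by
  obtain ⟨j, hj, hj'⟩ := hy
  refine ⟨j.succ, hj, fun k hk => ?_⟩
  cases k using Fin.cases with
  | zero => rfl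
  | succ k => exact hj' k (Fin.succ_lt_succ_iff.mp hk)

theorem hasLeadingOne_cons (y : Fin v → K) : HasLeadingOne (Fin.cons 1 y : Fin (v + 1) → K) :=
  ⟨0, rfl, fun k hk => absurd hk (Fin.not_lt_zero k)⟩

theorem hasLeadingOne_single (i : Fin v) : HasLeadingOne (Pi.single i (1 : K)) :=
  ⟨i, Pi.single_eq_same i 1, fun _ hk => Pi.single_eq_of_ne hk.ne 1⟩

theorem hasLeadingOne_map_of_ne_zero (φ : ZMod 2 →+* K) {y : Fin v → ZMod 2} (hy : y ≠ 0) :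
    HasLeadingOne fun j => φ (y j) := by
  obtain ⟨j, hj, hmin⟩ := wellFounded_lt.has_min {j | y j ≠ 0} (Function.ne_iff.mp hy)
  refine ⟨j, ?_, fun k hk => ?_⟩
  · show φ (y j) = 1
    rw [(by decide : ∀ a : ZMod 2, a ≠ 0 → a = 1) _ hj, map_one]
  · show φ (y k) = 0
    rw [not_not.mp fun hk' => hmin k hk' hk, map_zero]

theorem IsProjectiveSelfOrthogonal.of_hasLeadingOne {x : ι → Fin v → K}
    (hinj : Function.Injective x) (hlead : ∀ i, HasLeadingOne (x i))
    (hsum : ∀ j k, ∑ i, x i j ^ 2 * x i k = 0) : IsProjectiveSelfOrthogonal x :=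
  ⟨fun i => (hlead i).ne_zero, fun i j _ h => hinj ((hlead i).eq_of_smul_eq (hlead j) h), hsum⟩

end SelfOrthogonal

section Families

variable {K : Type} [Field K]

def HasSelfOrthogonalFamily (K : Type) [Field K] (n : ℕ) : Prop :=
  ∃ (v : ℕ) (ι : Type) (_ : Fintype ι) (x : ι → Fin v → K),
    Fintype.card ι = n ∧ IsProjectiveSelfOrthogonal x

theorem HasSelfOrthogonalFamily.add {m n : ℕ} (hm : HasSelfOrthogonalFamily K m)
    (hn : HasSelfOrthogonalFamily K n) : HasSelfOrthogonalFamily K (m + n) := by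
  obtain ⟨v, ι, _, x, rfl, hx⟩ := hm
  obtain ⟨w, κ, _, y, rfl, hy⟩ := hn
  exact ⟨v + w, ι ⊕ κ, inferInstance, _, Fintype.card_sum, hx.append hy⟩

theorem hasSelfOrthogonalFamily_of_hasLeadingOne {v : ℕ} {ι : Type} [Fintype ι]
    (x : ι → Fin v → K) (hinj : Function.Injective x) (hlead : ∀ i, HasLeadingOne (x i))
    (hsum : ∀ j k, ∑ i, x i j ^ 2 * x i k = 0) : HasSelfOrthogonalFamily K (Fintype.card ι) :=
  ⟨v, ι, inferInstance, x, rfl, .of_hasLeadingOne hinj hlead hsum⟩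

theorem hasSelfOrthogonalFamily_of_binary [CharP K 2] {v : ℕ} {ι : Type} [Fintype ι]
    (y : ι → Fin v → ZMod 2) (hinj : Function.Injective y) (hy : ∀ i, y i ≠ 0)
    (hsum : ∀ j k, ∑ i, y i j ^ 2 * y i k = 0) :
    HasSelfOrthogonalFamily K (Fintype.card ι) := by
  let φ := ZMod.castHom (dvd_refl 2) K
  refine hasSelfOrthogonalFamily_of_hasLeadingOne (fun i j => φ (y i j))
    (fun i i' h => hinj (funext fun j => φ.injective (congrFun h j)))
    (fun i => hasLeadingOne_map_of_ne_zero φ (hy i)) fun j k => ?_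
  simp only [← map_pow, ← map_mul, ← map_sum, hsum, map_zero]

variable [Fintype K]

theorem IsProjectiveSelfOrthogonal.exists_isDivisibleSet (hK : Fintype.card K = 4)
    {ι : Type*} [Fintype ι] {v : ℕ} {x : ι → Fin v → K} (hx : IsProjectiveSelfOrthogonal x) :
    ∃ S : Set (PGPoint K v), IsDivisibleSet K 2 S ∧ S.ncard = Fintype.card ι := by
  let P : ι → PGPoint K v := fun i => ⟨K ∙ x i, finrank_span_singleton (hx.ne_zero i)⟩
  have hP : Function.Injective P := fun i j h => by
    obtain ⟨c, hc⟩ := Submodule.span_singleton_eq_span_singleton.mp (congrArg Subtype.val h)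
    exact hx.eq_of_smul_eq i j c hc
  refine ⟨Set.range P, fun H hH => ?_,
    by rw [Set.ncard_range_of_injective hP, Nat.card_eq_fintype_card]⟩
  obtain ⟨f, rfl⟩ := H.exists_eq_ker_of_finrank_eq (by rwa [Module.finrank_fin_fun])
  have hinter :
      Set.range P ∩ {Q | Q.1 ≤ LinearMap.ker f} = P '' ({i | f (x i) = 0} : Finset ι) := by
    ext Q
    constructor
    · rintro ⟨⟨i, rfl⟩, hi⟩
      exact ⟨i, by simpa [P, Submodule.span_singleton_le_iff_mem] using hi, rfl⟩
    · rintro ⟨i, hi, rfl⟩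
      exact ⟨⟨i, rfl⟩, by simpa [P, Submodule.span_singleton_le_iff_mem] using hi⟩
  rw [hinter, Set.ncard_image_of_injective _ hP, Set.ncard_coe_finset,
    Set.ncard_range_of_injective hP, Nat.card_eq_fintype_card, ← Finset.card_univ,
    ← Finset.card_filter_add_card_filter_not (fun i => f (x i) = 0)]
  obtain ⟨k, hk⟩ := even_card_apply_ne_zero hK hx.sum_sq_mul_eq_zero f
  rw [hk]
  unfold Nat.ModEq
  omega

theorem hasSelfOrthogonalFamily_five (hK : Fintype.card K = 4) :
    HasSelfOrthogonalFamily K 5 := by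
  have := charP_two_of_card_eq_four hK
  have h := hasSelfOrthogonalFamily_of_hasLeadingOne
    (Sum.elim (fun i => Pi.single i 1) fun u : Kˣ => ![1, (u : K)]) ?_ ?_ ?_
  · rwa [Fintype.card_sum, Fintype.card_units, hK, Fintype.card_fin] at h
  · refine Function.Injective.sumElim (fun i i' h => ?_) (fun u u' h => ?_) fun i u h => ?_
    · simpa [Pi.single_apply] using congrFun h i
    · exact Units.ext (by simpa using congrFun h 1)
    · fin_cases i <;> simp [funext_iff, Fin.forall_fin_two, Pi.single_apply] at h
      exact u.ne_zero h.symm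
  · rintro (i | u)
    · exact hasLeadingOne_single i
    · exact hasLeadingOne_cons _
  · intro j k
    fin_cases j <;> fin_cases k <;>
      simp [Fintype.sum_sum_type, Pi.single_apply, natCast_card_units_of_card_eq_four hK,
        ← pow_succ, sum_units_pow_of_card_eq_four hK, sum_units_of_card_eq_four hK,
        CharTwo.add_self_eq_zero]

theorem hasSelfOrthogonalFamily_six (hK : Fintype.card K = 4) :
    HasSelfOrthogonalFamily K 6 := by
  have := charP_two_of_card_eq_four hK
  have h := hasSelfOrthogonalFamily_of_hasLeadingOne
    (Sum.elim (fun i => Pi.single i 1) fun u : Kˣ => ![1, (u : K), (u : K) ^ 2]) ?_ ?_ ?_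
  · rwa [Fintype.card_sum, Fintype.card_units, hK, Fintype.card_fin] at h
  · refine Function.Injective.sumElim (fun i i' h => ?_) (fun u u' h => ?_) fun i u h => ?_
    · simpa [Pi.single_apply] using congrFun h i
    · exact Units.ext (by simpa using congrFun h 1)
    · fin_cases i <;> simp [funext_iff, Fin.forall_fin_succ, Pi.single_apply] at h
      exact u.ne_zero h.1.symm
  · rintro (i | u)
    · exact hasLeadingOne_single i
    · exact hasLeadingOne_cons _
  · intro j k
    fin_cases j <;> fin_cases k <;>
      simp [Fintype.sum_sum_type, Pi.single_apply, natCast_card_units_of_card_eq_four hK,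
        ← pow_succ, ← pow_mul, ← pow_add, sum_units_pow_of_card_eq_four hK,
        sum_units_of_card_eq_four hK, CharTwo.add_self_eq_zero]

theorem hasSelfOrthogonalFamily_seven (hK : Fintype.card K = 4) :
    HasSelfOrthogonalFamily K 7 := by
  have := charP_two_of_card_eq_four hK
  have h := hasSelfOrthogonalFamily_of_binary (K := K)
    (Subtype.val : {z : Fin 3 → ZMod 2 // z ≠ 0} → Fin 3 → ZMod 2)
    Subtype.val_injective (fun z => z.2) (by decide)
  rwa [show Fintype.card {z : Fin 3 → ZMod 2 // z ≠ 0} = 7 by decide] at h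

theorem hasSelfOrthogonalFamily_eight (hK : Fintype.card K = 4) :
    HasSelfOrthogonalFamily K 8 := by
  have := charP_two_of_card_eq_four hK
  have h := hasSelfOrthogonalFamily_of_binary (K := K)
    (fun z : Fin 3 → ZMod 2 => (Fin.cons 1 z : Fin 4 → ZMod 2))
    (fun z z' h => by simpa using congrArg Fin.tail h) (fun z h => one_ne_zero (congrFun h 0))
    (by decide)
  rwa [show Fintype.card (Fin 3 → ZMod 2) = 8 by simp] at h

theorem hasSelfOrthogonalFamily_nine (hK : Fintype.card K = 4) :
    HasSelfOrthogonalFamily K 9 := by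
  have := charP_two_of_card_eq_four hK
  have h := hasSelfOrthogonalFamily_of_hasLeadingOne
    (fun p : Fin 3 × Kˣ => ![![1, (p.2 : K), 0], ![0, 1, (p.2 : K)], ![1, 0, (p.2 : K)]] p.1)
    ?_ ?_ ?_
  · rwa [Fintype.card_prod, Fintype.card_units, hK, Fintype.card_fin] at h
  · rintro ⟨i, u⟩ ⟨i', u'⟩ h
    fin_cases i <;> fin_cases i' <;> simp [funext_iff, Fin.forall_fin_succ] at h ⊢ <;>
      exact Units.ext h
  · rintro ⟨i, u⟩
    fin_cases i
    · exact hasLeadingOne_cons _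
    · exact (hasLeadingOne_cons _).cons_zero
    · exact hasLeadingOne_cons _
  · intro j k
    fin_cases j <;> fin_cases k <;>
      simp [Fintype.sum_prod_type, Fin.sum_univ_three, natCast_card_units_of_card_eq_four hK,
        ← pow_succ, sum_units_pow_of_card_eq_four hK, sum_units_of_card_eq_four hK,
        CharTwo.add_self_eq_zero]

theorem hasSelfOrthogonalFamily_of_five_le (hK : Fintype.card K = 4) {n : ℕ} (hn : 5 ≤ n) :
    HasSelfOrthogonalFamily K n := by
  induction n using Nat.strong_induction_on with
  | _ n ih =>
    rcases le_or_gt n 9 with hle | hgt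
    · interval_cases n
      exacts [hasSelfOrthogonalFamily_five hK, hasSelfOrthogonalFamily_six hK,
        hasSelfOrthogonalFamily_seven hK, hasSelfOrthogonalFamily_eight hK,
        hasSelfOrthogonalFamily_nine hK]
    · simpa [Nat.sub_add_cancel (by omega : 5 ≤ n)] using
        (ih (n - 5) (by omega) (by omega)).add (hasSelfOrthogonalFamily_five hK)

end Families

/-- For `n ≥ 1`, a dimension `v` and a `2`-divisible set of points `S` in
`PG(v-1,4)` with `|S| = n` exist iff `n ≥ 5`. -/
theorem stmt_10 (hF : Fintype.card F = 4) (n : ℕ) (hn : 1 ≤ n) :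
    (∃ (v : ℕ) (S : Set (PGPoint F v)), IsDivisibleSet F 2 S ∧ S.ncard = n) ↔ 5 ≤ n := by
  constructor
  · rintro ⟨v, S, hS, rfl⟩
    have := hS.card_lt_ncard (by rw [hF]; decide) (by omega)
    omega
  · intro hn5
    obtain ⟨v, ι, _, x, rfl, hx⟩ := hasSelfOrthogonalFamily_of_five_le hF hn5
    exact ⟨v, hx.exists_isDivisibleSet hF⟩

end
end

section
/- Let q be an odd prime power and let M be a 2-divisible multiset of points in PG(v−1,q). Then there exists a multiset of points M' in PG(v−1,q) with M = 2·M', i.e., every point multiplicity M(P) is even; in particular the cardinality #M is even. -/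
open Module Finset

noncomputable section
open scoped Classical

variable (F : Type) [Field F] [Fintype F]

section Aux
set_option linter.unusedSectionVars false
variable {v : ℕ}

/-- The dot product with `x`, as a linear functional. -/
def dotMap (x : Fin v → F) : (Fin v → F) →ₗ[F] F where
  toFun a := ∑ i, x i * a i
  map_add' a b := by simp [mul_add, Finset.sum_add_distrib]
  map_smul' c a := by simp [Finset.mul_sum, mul_left_comm]

lemma dotMap_comm (x a : Fin v → F) : dotMap F x a = dotMap F a x := by
  simp [dotMap, mul_comm]

lemma dotMap_dual (φ : Module.Dual F (Fin v → F)) (x : Fin v → F) :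
    dotMap F x (fun i => φ (Pi.single i 1)) = φ x := by
  have h1 : ∀ i, x i * φ (Pi.single i (1:F)) = φ (Pi.single i (x i)) := by
    intro i
    have hs : x i • (Pi.single i 1 : Fin v → F) = Pi.single i (x i) := by
      funext j
      by_cases h : j = i <;> simp [h, Pi.single_apply]
    rw [← hs, map_smul, smul_eq_mul]
  calc dotMap F x (fun i => φ (Pi.single i 1)) = ∑ i, x i * φ (Pi.single i (1:F)) := rfl
    _ = ∑ i, φ (Pi.single i (x i)) := by simp [h1]
    _ = φ (∑ i, Pi.single i (x i)) := by rw [map_sum]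
    _ = φ x := by rw [Finset.univ_sum_single]

lemma odd_card_fiber (hq : Odd (Fintype.card F)) {B : Type} [AddCommGroup B] [Module F B]
    (f : (Fin v → F) →ₗ[F] B) (b : B) (a₀ : Fin v → F) (h : f a₀ = b) :
    Odd (Finset.univ.filter (fun a => f a = b)).card := by
  have e : LinearMap.ker f ≃ {a : Fin v → F // f a = b} :=
    { toFun := fun t => ⟨a₀ + t.1, by
        have ht := t.2
        rw [LinearMap.mem_ker] at ht
        simp [map_add, ht, h]⟩
      invFun := fun s => ⟨s.1 - a₀, by
        rw [LinearMap.mem_ker, map_sub, s.2, h, sub_self]⟩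
      left_inv := fun t => by ext; simp
      right_inv := fun s => by ext; simp }
  have hcard : (Finset.univ.filter (fun a => f a = b)).card
      = Fintype.card (LinearMap.ker f) := by
    rw [← Fintype.card_subtype]
    exact (Fintype.card_congr e).symm
  rw [hcard, card_eq_pow_finrank (K := F) (V := LinearMap.ker f)]
  exact hq.pow

lemma finrank_ker_dotMap (a x : Fin v → F) (h : dotMap F a x = 1) :
    finrank F (LinearMap.ker (dotMap F a)) = v - 1 := by
  have hrn := LinearMap.finrank_range_add_finrank_ker (dotMap F a)
  have hrange : LinearMap.range (dotMap F a) = ⊤ := by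
    rw [LinearMap.range_eq_top]
    intro c
    exact ⟨c • x, by rw [map_smul, h, smul_eq_mul, mul_one]⟩
  rw [hrange, finrank_top, Module.finrank_fin_fun, finrank_self] at hrn
  omega

/-- Every projective point is spanned by a nonzero vector. -/
lemma pgpoint_span (P : PGPoint F v) : ∃ x : Fin v → F, x ≠ 0 ∧ Submodule.span F {x} = P.1 := by
  have hP1 : finrank F P.1 = 1 := P.2
  have hbot : P.1 ≠ ⊥ := by
    intro h
    rw [h, finrank_bot] at hP1
    exact one_ne_zero hP1.symm
  obtain ⟨x, hxP, hx0⟩ := Submodule.exists_mem_ne_zero_of_ne_bot hbot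
  have hle : Submodule.span F {x} ≤ P.1 := by
    rw [Submodule.span_le, Set.singleton_subset_iff]; exact hxP
  refine ⟨x, hx0, Submodule.eq_of_le_of_finrank_le hle ?_⟩
  rw [hP1, finrank_span_singleton hx0]

lemma odd_cast (n : ℕ) (h : Odd n) : (n : ZMod 2) = 1 := by
  obtain ⟨k, hk⟩ := h
  subst hk
  push_cast
  have : (2 : ZMod 2) = 0 := rfl
  rw [this]
  ring

end Aux

/-- Over a field of odd order `q`, every `2`-divisible multiset of points
`M` in `PG(v-1,q)` satisfies `M = 2·M'` for some multiset `M'`; in particular `#M` is even. -/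
theorem stmt_11 (hq : Odd (Fintype.card F)) (v : ℕ) (M : PGPoint F v → ℕ)
    (hdiv : IsDivisibleMultiset F 2 M) :
    (∃ M' : PGPoint F v → ℕ, ∀ P : PGPoint F v, M P = 2 * M' P) ∧ 2 ∣ mCard F M := by
  have key : ∀ P : PGPoint F v, 2 ∣ M P := by
    intro P
    obtain ⟨x, hx0, hxP⟩ := pgpoint_span F P
    set S : Finset (Fin v → F) := Finset.univ.filter (fun a => dotMap F x a = 1) with hS
    -- S is the set of functionals (as dot vectors) taking value 1 at x; it has odd cardinality
    have hSodd : Odd S.card := by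
      obtain ⟨i, hi⟩ := Function.ne_iff.mp hx0
      have hi' : x i ≠ 0 := by simpa using hi
      refine odd_card_fiber F hq (dotMap F x) 1 (Pi.single i (x i)⁻¹) ?_
      show ∑ j, x j * (Pi.single i (x i)⁻¹ : Fin v → F) j = 1
      rw [Finset.sum_eq_single i]
      · simp [mul_inv_cancel₀ hi']
      · intro j _ hj
        simp [Pi.single_apply, hj]
      · simp
    -- for a ∈ S, the kernel of dotMap a is a hyperplane
    have hker : ∀ a ∈ S, finrank F (LinearMap.ker (dotMap F a)) = v - 1 := by
      intro a ha
      rw [hS, Finset.mem_filter] at ha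
      exact finrank_ker_dotMap F a x (by rw [← dotMap_comm]; exact ha.2)
    -- the divisibility hypothesis, in ZMod 2
    have hmod : ∀ a ∈ S,
        (mVal F M (LinearMap.ker (dotMap F a)) : ZMod 2) = (mCard F M : ZMod 2) := by
      intro a ha
      rw [ZMod.natCast_eq_natCast_iff]
      exact (hdiv _ (hker a ha)).symm
    -- first computation of the double sum
    have lhs : ∑ a ∈ S, (mVal F M (LinearMap.ker (dotMap F a)) : ZMod 2)
        = (mCard F M : ZMod 2) := by
      rw [Finset.sum_congr rfl hmod, Finset.sum_const, nsmul_eq_mul, odd_cast _ hSodd, one_mul]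
    -- second computation of the double sum
    have rhs : ∑ a ∈ S, (mVal F M (LinearMap.ker (dotMap F a)) : ZMod 2)
        = (mCard F M : ZMod 2) - (M P : ZMod 2) := by
      have expand : ∀ a : Fin v → F, (mVal F M (LinearMap.ker (dotMap F a)) : ZMod 2)
          = ∑ Q : PGPoint F v,
              if Q.1 ≤ LinearMap.ker (dotMap F a) then (M Q : ZMod 2) else 0 := by
        intro a
        rw [mVal, Nat.cast_sum]
        exact Finset.sum_congr rfl (fun Q _ => by split <;> simp)
      rw [Finset.sum_congr rfl (fun a _ => expand a), Finset.sum_comm]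
      have inner : ∀ Q : PGPoint F v,
          (∑ a ∈ S, if Q.1 ≤ LinearMap.ker (dotMap F a) then (M Q : ZMod 2) else 0)
          = if Q = P then 0 else (M Q : ZMod 2) := by
        intro Q
        obtain ⟨y, hy0, hyQ⟩ := pgpoint_span F Q
        have hcond : ∀ a : Fin v → F,
            (Q.1 ≤ LinearMap.ker (dotMap F a)) ↔ dotMap F y a = 0 := by
          intro a
          rw [← hyQ, Submodule.span_le, Set.singleton_subset_iff]
          constructor
          · intro h
            have := h
            rw [SetLike.mem_coe, LinearMap.mem_ker] at this
            rw [dotMap_comm]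
            exact this
          · intro h
            rw [SetLike.mem_coe, LinearMap.mem_ker, ← dotMap_comm]
            exact h
        simp_rw [hcond]
        rw [← Finset.sum_filter]
        by_cases hQP : Q = P
        · subst hQP
          have : S.filter (fun a => dotMap F y a = 0) = ∅ := by
            apply Finset.filter_false_of_mem
            intro a ha
            rw [hS, Finset.mem_filter] at ha
            intro hya
            -- x ∈ Q.1 = span{y}, so dotMap x a = c * dotMap y a = 0, contradiction
            have hxQ : x ∈ Submodule.span F ({y} : Set (Fin v → F)) := by
              rw [hyQ, ← hxP]
              exact Submodule.mem_span_singleton_self x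
            obtain ⟨c, hc⟩ := Submodule.mem_span_singleton.mp hxQ
            have : dotMap F x a = 0 := by
              rw [← hc, dotMap_comm, map_smul, ← dotMap_comm F y a, hya, smul_zero]
            rw [ha.2] at this
            exact one_ne_zero this
          rw [this]
          simp
        · rw [if_neg hQP]
          -- the filter has odd cardinality
          have hxQ : x ∉ Q.1 := by
            intro hx
            apply hQP
            apply Subtype.ext
            apply (Submodule.eq_of_le_of_finrank_le ?_ ?_).symm
            · rw [← hxP, Submodule.span_le, Set.singleton_subset_iff]
              exact hx
            · rw [P.2, Q.2]
          obtain ⟨φ, hφx, hφmap⟩ := Submodule.exists_dual_map_eq_bot_of_notMem hxQ inferInstance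
          set ψ : Module.Dual F (Fin v → F) := (φ x)⁻¹ • φ with hψ
          have hψx : ψ x = 1 := by
            rw [hψ, LinearMap.smul_apply, smul_eq_mul, inv_mul_cancel₀ hφx]
          have hφy : φ y = 0 := by
            have hy : y ∈ Q.1 := by
              rw [← hyQ]; exact Submodule.mem_span_singleton_self y
            have : φ y ∈ Submodule.map φ Q.1 := Submodule.mem_map_of_mem hy
            rw [hφmap, Submodule.mem_bot] at this
            exact this
          have hψy : ψ y = 0 := by
            rw [hψ, LinearMap.smul_apply, hφy, smul_zero]
          set a₀ : Fin v → F := fun i => ψ (Pi.single i 1) with ha₀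
          have hfilter : S.filter (fun a => dotMap F y a = 0)
              = Finset.univ.filter
                  (fun a => ((dotMap F x).prod (dotMap F y)) a = ((1 : F), (0 : F))) := by
            rw [hS, Finset.filter_filter]
            apply Finset.filter_congr
            intro a _
            simp [LinearMap.prod_apply, Prod.ext_iff, Pi.prod]
          have hodd : Odd (S.filter (fun a => dotMap F y a = 0)).card := by
            rw [hfilter]
            have h1 : dotMap F x a₀ = 1 := by rw [ha₀, dotMap_dual, hψx]
            have h2 : dotMap F y a₀ = 0 := by rw [ha₀, dotMap_dual, hψy]
            have hoc := odd_card_fiber F hq ((dotMap F x).prod (dotMap F y))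
              ((1 : F), (0 : F)) a₀ (by simp [LinearMap.prod_apply, Pi.prod, h1, h2])
            convert hoc using 3
          rw [Finset.sum_const, nsmul_eq_mul, odd_cast _ hodd, one_mul]
      rw [Finset.sum_congr rfl (fun Q _ => inner Q)]
      have split : ∀ Q : PGPoint F v,
          (if Q = P then 0 else (M Q : ZMod 2))
          = (M Q : ZMod 2) - (if Q = P then (M Q : ZMod 2) else 0) := by
        intro Q
        split <;> simp_all
      rw [Finset.sum_congr rfl (fun Q _ => split Q), Finset.sum_sub_distrib,
        Finset.sum_ite_eq' Finset.univ P (fun Q => (M Q : ZMod 2)), if_pos (Finset.mem_univ P),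
        mCard, Nat.cast_sum]
    -- combine
    have hMP : (M P : ZMod 2) = 0 := by
      rw [lhs] at rhs
      have := rhs
      linear_combination this
    rwa [ZMod.natCast_eq_zero_iff] at hMP
  refine ⟨⟨fun P => M P / 2, fun P => (Nat.mul_div_cancel' (key P)).symm⟩, ?_⟩
  exact Finset.dvd_sum (fun P _ => key P)

end
end

section
/- Let q be a prime power and let M be a 2-divisible multiset of points in PG(v−1,q). Then there exist a function w from the points of PG(v−1,q) to ℕ and a 2-divisible set of points S in PG(v−1,q) such that M(P) = 2·w(P) + χ_S(P) for every point P, where χ_S(P) = 1 if P ∈ S and χ_S(P) = 0 otherwise. -/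
open Module Finset

noncomputable section
open scoped Classical

variable (F : Type) [Field F] [Fintype F]

/-- Every `2`-divisible multiset of points `M` in `PG(v-1,q)` decomposes as
`M(P) = 2·w(P) + χ_S(P)` for a multiset `w` and a `2`-divisible set of points `S`. -/
theorem stmt_12 (v : ℕ) (M : PGPoint F v → ℕ) (hdiv : IsDivisibleMultiset F 2 M) :
    ∃ (w : PGPoint F v → ℕ) (S : Set (PGPoint F v)),
      IsDivisibleSet F 2 S ∧
      ∀ P : PGPoint F v, M P = 2 * w P + (if P ∈ S then 1 else 0) := by
  refine ⟨fun P => M P / 2, {P | M P % 2 = 1}, ?_, ?_⟩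
  · intro H hH
    have key : ∀ (f : PGPoint F v → ℕ),
        ({P : PGPoint F v | f P % 2 = 1}.ncard : ZMod 2) = ∑ P, (f P : ZMod 2) := by
      intro f
      rw [Set.ncard_eq_toFinset_card']
      rw [show (Set.toFinset {P : PGPoint F v | f P % 2 = 1})
          = Finset.univ.filter (fun P => f P % 2 = 1) by
        ext P; simp]
      rw [Finset.card_filter]
      push_cast
      refine Finset.sum_congr rfl fun P _ => ?_
      rcases Nat.even_or_odd (f P) with h | h
      · simp [Nat.even_iff.mp h, (ZMod.natCast_eq_zero_iff _ 2).mpr h.two_dvd]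
      · rw [if_pos (Nat.odd_iff.mp h), ← ZMod.natCast_mod, Nat.odd_iff.mp h]
        norm_num
    have h1 : ({P : PGPoint F v | M P % 2 = 1}.ncard : ZMod 2) = (mCard F M : ZMod 2) := by
      rw [key M, mCard]; push_cast; rfl
    have h2 : (({P : PGPoint F v | M P % 2 = 1} ∩ {P | P.1 ≤ H}).ncard : ZMod 2)
        = (mVal F M H : ZMod 2) := by
      have : ({P : PGPoint F v | M P % 2 = 1} ∩ {P | P.1 ≤ H})
          = {P : PGPoint F v | (if P.1 ≤ H then M P else 0) % 2 = 1} := by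
        ext P
        by_cases h : P.1 ≤ H <;> simp [h]
      rw [this, key, mVal]
      push_cast
      rfl
    rw [← ZMod.natCast_eq_natCast_iff] at *
    rw [h1, h2]
    exact (ZMod.natCast_eq_natCast_iff _ _ _).mpr (hdiv H hH)
  · intro P
    rcases Nat.even_or_odd (M P) with h | h
    · simp [Nat.even_iff.mp h, Nat.two_mul_div_two_of_even h]
    · have h1 := Nat.odd_iff.mp h
      simp only [Set.mem_setOf_eq, h1, if_pos]
      omega

end
end

section
/- Let e ≥ 1, q = 2^e, and let S be a nonempty 2-divisible set of points in PG(v−1,q). Then |S| ≥ q+1, and if |S| = q+1 then S is the set of all points of a line, i.e., there is a two-dimensional subspace L of F_q^v such that S consists exactly of the one-dimensional subspaces contained in L. -/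
open Module Finset

noncomputable section
open scoped Classical

variable (F : Type) [Field F] [Fintype F]

/-! Hyperplanes are the kernels of the nonzero functionals, each hyperplane arising from `q - 1` of
them. If `|S| ≤ q`, counting functionals gives a hyperplane missing `S`, so `|S|` is even, and a
hyperplane meeting `S` in exactly one point, so `|S|` is odd. If `|S| = q + 1`, all intersection
numbers `f(φ) = |S ∩ ker φ|` are odd because `q` is even, and double counting points and pairs of
points gives `∑ (f - 1) (|S| - f) = 0`, so `f(φ) ∈ {1, |S|}`. A hyperplane through two points
`P, Q ∈ S` therefore contains all of `S`, so `S` lies on the line `PQ`, which has `q + 1` points. -/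

theorem exists_forall_not_of_sum_card_filter_lt {α β : Type*} (A : Finset α) (T : Finset β)
    (p : α → β → Prop) (h : ∑ a ∈ A, #{b ∈ T | p a b} < #T) :
    ∃ b ∈ T, ∀ a ∈ A, ¬ p a b := by
  by_contra! hcover
  have : T ⊆ A.biUnion fun a => {b ∈ T | p a b} := fun b hb => by
    obtain ⟨a, ha, hab⟩ := hcover b hb
    exact mem_biUnion.mpr ⟨a, ha, mem_filter.mpr ⟨hb, hab⟩⟩
  exact (card_le_card this |>.trans card_biUnion_le).not_gt h

theorem Finset.offDiag_filter {α : Type*} (s : Finset α) (p : α → Prop) [DecidablePred p] :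
    {a ∈ s | p a}.offDiag = {x ∈ s.offDiag | p x.1 ∧ p x.2} := by
  ext x
  simp only [mem_offDiag, mem_filter]
  tauto

-- The hypothesis says `∑ (g - 1) * (N - g) = 0`, a sum of nonnegative terms.
theorem eq_one_or_eq_of_sum_sub_sum_eq {β : Type*} {T : Finset β} {g : β → ℤ} {N : ℤ}
    (h1 : ∀ b ∈ T, 1 ≤ g b) (hN : ∀ b ∈ T, g b ≤ N)
    (h : N * ∑ b ∈ T, g b - ∑ b ∈ T, (g b * g b - g b) = N * #T) {b : β} (hb : b ∈ T) :
    g b = 1 ∨ g b = N := by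
  have hzero : ∑ b ∈ T, (g b - 1) * (N - g b) = 0 := by
    rw [← sub_eq_zero.mpr h, card_eq_sum_ones, Nat.cast_sum, mul_sum, mul_sum,
      ← sum_sub_distrib, ← sum_sub_distrib]
    exact sum_congr rfl fun _ _ => by push_cast; ring
  have hnonneg : ∀ c ∈ T, 0 ≤ (g c - 1) * (N - g c) := fun c hc =>
    mul_nonneg (sub_nonneg.mpr (h1 c hc)) (sub_nonneg.mpr (hN c hc))
  rcases mul_eq_zero.mp ((sum_eq_zero_iff_of_nonneg hnonneg).mp hzero b hb) with h | h
  · exact Or.inl (by linarith)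
  · exact Or.inr (by linarith)

theorem finrank_sup_eq_two {K E : Type*} [DivisionRing K] [AddCommGroup E] [Module K E]
    [FiniteDimensional K E] {P Q : {P : Submodule K E // finrank K P = 1}} (h : P ≠ Q) :
    finrank K ↥(P.1 ⊔ Q.1) = 2 := by
  have hinf : finrank K ↥(P.1 ⊓ Q.1) ≠ 1 := fun h1 => h <| Subtype.ext <|
    (Submodule.eq_of_le_of_finrank_eq inf_le_left (h1.trans P.2.symm)).symm.trans
      (Submodule.eq_of_le_of_finrank_eq inf_le_right (h1.trans Q.2.symm))
  have hle : finrank K ↥(P.1 ⊓ Q.1) ≤ 1 := (Submodule.finrank_mono inf_le_left).trans P.2.le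
  have := Submodule.finrank_sup_add_finrank_inf_eq P.1 Q.1
  rw [P.2, Q.2] at this
  omega

theorem exists_le_ker_not_le_ker {K E : Type*} [Field K] [AddCommGroup E] [Module K E]
    {L R : Submodule K E} (h : ¬ R ≤ L) :
    ∃ φ : Dual K E, L ≤ LinearMap.ker φ ∧ ¬ R ≤ LinearMap.ker φ := by
  obtain ⟨r, hrR, hrL⟩ := SetLike.not_le_iff_exists.mp h
  obtain ⟨φ, hφr, hφL⟩ := Submodule.exists_dual_map_eq_bot_of_notMem hrL inferInstance
  exact ⟨φ, LinearMap.le_ker_iff_map.mpr hφL, fun hR => hφr (hR hrR)⟩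

section PointsAndHyperplanes

variable {F} {V : Type*} [AddCommGroup V] [Module F V]

local notation "Point" => {P : Submodule F V // finrank F P = 1}

theorem ncard_setOf_le_of_finrank_eq_two {L : Submodule F V} (hL : finrank F L = 2) :
    {P : Point | P.1 ≤ L}.ncard = Fintype.card F + 1 := by
  let eSub : {H : Submodule F L // finrank F H = 1} ≃ {W : {W // W ≤ L} // finrank F W.1 = 1} :=
    Equiv.subtypeEquiv (Submodule.MapSubtype.orderIso L).toEquiv fun H =>
      (Submodule.finrank_map_subtype_eq L H).symm ▸ Iff.rfl
  let e : {P : Point // P.1 ≤ L} ≃ Projectivization F L :=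
    (Equiv.subtypeSubtypeEquivSubtypeInter _ (· ≤ L)).trans <|
    (Equiv.subtypeEquivRight fun _ => and_comm).trans <|
    (Equiv.subtypeSubtypeEquivSubtypeInter (· ≤ L) _).symm.trans <|
    eSub.symm.trans (Projectivization.equivSubmodule F L).symm
  rw [← Nat.card_eq_fintype_card, ← Projectivization.card_of_finrank_two F L hL]
  exact Nat.card_congr e

variable [FiniteDimensional F V]

instance Module.Dual.instFintype : Fintype (Dual F V) :=
  @Fintype.ofFinite _ (Module.finite_of_finite F)

theorem card_ne_zero_le_ker (W : Submodule F V) :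
    #{φ : Dual F V | φ ≠ 0 ∧ W ≤ LinearMap.ker φ}
      = Fintype.card F ^ (finrank F V - finrank F W) - 1 := by
  have hset : ({φ : Dual F V | φ ≠ 0 ∧ W ≤ LinearMap.ker φ} : Finset _)
      = ({φ | φ ∈ W.dualAnnihilator} : Finset _).erase 0 := by
    ext φ
    simp [Submodule.mem_dualAnnihilator, SetLike.le_def]
  have hdim := Subspace.finrank_add_finrank_dualAnnihilator_eq W
  rw [hset, card_erase_of_mem (by simp), ← Fintype.card_subtype,
    card_eq_pow_finrank (K := F) (V := W.dualAnnihilator)]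
  congr 2
  omega

theorem sum_card_filter_le_ker {ι : Type*} (A : Finset ι) (W : ι → Submodule F V) :
    ∑ φ : Dual F V with φ ≠ 0, #{i ∈ A | W i ≤ LinearMap.ker φ}
      = ∑ i ∈ A, (Fintype.card F ^ (finrank F V - finrank F (W i)) - 1) := by
  simp_rw [card_filter]
  rw [sum_comm]
  refine sum_congr rfl fun i _ => ?_
  rw [← card_filter, filter_filter, card_ne_zero_le_ker]

theorem exists_le_ker_forall_not_le {ι : Type*} (W : Submodule F V) (A : Finset ι)
    (U : ι → Submodule F V) {k : ℕ} (hU : ∀ i ∈ A, finrank F ↥(W ⊔ U i) = k)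
    (h : #A * (Fintype.card F ^ (finrank F V - k) - 1)
      < Fintype.card F ^ (finrank F V - finrank F W) - 1) :
    ∃ φ : Dual F V, φ ≠ 0 ∧ W ≤ LinearMap.ker φ ∧ ∀ i ∈ A, ¬ U i ≤ LinearMap.ker φ := by
  rw [← smul_eq_mul, ← sum_const, ← card_ne_zero_le_ker] at h
  rw [← sum_congr rfl fun i hi => by rw [← hU i hi, ← card_ne_zero_le_ker]] at h
  simp_rw [sup_le_iff, ← and_assoc] at h
  obtain ⟨φ, hφ, hA⟩ := exists_forall_not_of_sum_card_filter_lt A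
    {φ : Dual F V | φ ≠ 0 ∧ W ≤ LinearMap.ker φ} (fun i φ => U i ≤ LinearMap.ker φ)
    (by simpa only [filter_filter] using h)
  exact ⟨φ, (mem_filter.mp hφ).2.1, (mem_filter.mp hφ).2.2, hA⟩

theorem exists_forall_not_le_ker (S : Finset Point) (hV : 1 ≤ finrank F V)
    (hS : #S ≤ Fintype.card F) :
    ∃ φ : Dual F V, φ ≠ 0 ∧ ∀ P ∈ S, ¬ P.1 ≤ LinearMap.ker φ := by
  set q := Fintype.card F
  have hq : 2 ≤ q := Fintype.one_lt_card
  have hpow : q ^ finrank F V = q * q ^ (finrank F V - 1) := by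
    rw [← pow_succ', Nat.sub_add_cancel hV]
  have hqa : q ≤ q * q ^ (finrank F V - 1) := Nat.le_mul_of_pos_right _ (by positivity)
  obtain ⟨φ, hφ, -, hS⟩ := exists_le_ker_forall_not_le ⊥ S Subtype.val
    (fun P _ => by rw [bot_sup_eq, P.2]) <| calc
      #S * (q ^ (finrank F V - 1) - 1) ≤ q * (q ^ (finrank F V - 1) - 1) :=
        Nat.mul_le_mul_right _ hS
      _ < q ^ (finrank F V - finrank F (⊥ : Submodule F V)) - 1 := by
        rw [finrank_bot, Nat.sub_zero, hpow, Nat.mul_sub_one]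
        omega
  exact ⟨φ, hφ, hS⟩

theorem exists_filter_le_ker_eq_singleton {S : Finset Point} {P₀ : Point} (hP₀ : P₀ ∈ S)
    (hV : 2 ≤ finrank F V) (hS : #S ≤ Fintype.card F) :
    ∃ φ : Dual F V, φ ≠ 0 ∧ {P ∈ S | P.1 ≤ LinearMap.ker φ} = {P₀} := by
  set q := Fintype.card F with hq_def
  have hq : 2 ≤ q := Fintype.one_lt_card
  have hpow : q ^ (finrank F V - 1) = q * q ^ (finrank F V - 2) := by
    rw [← pow_succ']; congr 1; omega
  have ha : 1 ≤ q ^ (finrank F V - 2) := Nat.one_le_pow _ _ (by omega)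
  obtain ⟨φ, hφ, hP₀φ, hS⟩ := exists_le_ker_forall_not_le P₀.1 (S.erase P₀) Subtype.val
    (fun Q hQ => finrank_sup_eq_two (ne_of_mem_erase hQ).symm) <| by
      rw [card_erase_of_mem hP₀, P₀.2, hpow]
      have hq1 : 1 ≤ q * q ^ (finrank F V - 2) := Nat.one_le_iff_ne_zero.mpr (by positivity)
      have hS1 : 1 ≤ #S := card_pos.mpr ⟨P₀, hP₀⟩
      rw [← hq_def]
      zify [hq1, ha, hS1] at hS ⊢
      nlinarith
  refine ⟨φ, hφ, eq_singleton_iff_unique_mem.mpr ⟨mem_filter.mpr ⟨hP₀, hP₀φ⟩, fun Q hQ => ?_⟩⟩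
  by_contra hne
  exact hS Q (mem_erase.mpr ⟨hne, (mem_filter.mp hQ).1⟩) (mem_filter.mp hQ).2

theorem le_card_of_modEq_card_filter_le_ker {S : Finset Point} (hS : S.Nonempty)
    (hdiv : ∀ φ : Dual F V, φ ≠ 0 → #{P ∈ S | P.1 ≤ LinearMap.ker φ} ≡ #S [MOD 2]) :
    Fintype.card F + 1 ≤ #S := by
  obtain ⟨P₀, hP₀⟩ := hS
  by_contra! hlt
  have hV : 1 ≤ finrank F V := P₀.2 ▸ Submodule.finrank_le P₀.1
  obtain ⟨φ, hφ, hskew⟩ := exists_forall_not_le_ker S hV (by omega)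
  have heven : 0 ≡ #S [MOD 2] := by simpa [filter_false_of_mem hskew] using hdiv φ hφ
  obtain ⟨P, hP, Q, hQ, hPQ⟩ := one_lt_card.mp <| show 1 < #S by
    have := card_pos.mpr ⟨P₀, hP₀⟩
    unfold Nat.ModEq at heven
    omega
  have hV2 : 2 ≤ finrank F V := finrank_sup_eq_two hPQ ▸ Submodule.finrank_le _
  obtain ⟨ψ, hψ, htangent⟩ := exists_filter_le_ker_eq_singleton hP₀ hV2 (by omega)
  have hodd := hdiv ψ hψ
  rw [htangent, card_singleton] at hodd
  unfold Nat.ModEq at heven hodd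
  omega

theorem card_filter_le_ker_eq_one_or_eq {S : Finset Point} (hV : 2 ≤ finrank F V)
    (hcard : #S = Fintype.card F + 1)
    (hpos : ∀ φ : Dual F V, φ ≠ 0 → 1 ≤ #{P ∈ S | P.1 ≤ LinearMap.ker φ})
    {φ : Dual F V} (hφ : φ ≠ 0) :
    #{P ∈ S | P.1 ≤ LinearMap.ker φ} = 1 ∨ #{P ∈ S | P.1 ≤ LinearMap.ker φ} = #S := by
  set q := Fintype.card F with hq_def
  set a := q ^ (finrank F V - 2)
  have hq : 2 ≤ q := Fintype.one_lt_card
  have ha : 1 ≤ a := Nat.one_le_pow _ _ (by omega)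
  have hpow1 : q ^ (finrank F V - 1) = q * a := by rw [← pow_succ']; congr 1; omega
  have hpow : q ^ finrank F V = q * (q * a) := by rw [← hpow1, ← pow_succ']; congr 1; omega
  have hqa : 1 ≤ q * a := Nat.one_le_iff_ne_zero.mpr (by positivity)
  have hqqa : 1 ≤ q * (q * a) := Nat.one_le_iff_ne_zero.mpr (by positivity)
  have hcount : #{φ : Dual F V | φ ≠ 0} = q * (q * a) - 1 := by
    rw [← hpow]
    simpa using card_ne_zero_le_ker (⊥ : Submodule F V)
  have hsum : ∑ φ : Dual F V with φ ≠ 0, #{P ∈ S | P.1 ≤ LinearMap.ker φ}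
      = #S * (q * a - 1) := by
    rw [sum_card_filter_le_ker, sum_congr rfl fun P _ => by rw [P.2], sum_const, smul_eq_mul,
      ← hq_def, hpow1]
  have hsum_pairs : ∑ φ : Dual F V with φ ≠ 0, #{P ∈ S | P.1 ≤ LinearMap.ker φ}.offDiag
      = (#S * #S - #S) * (a - 1) := by
    simp_rw [offDiag_filter, ← sup_le_iff]
    rw [sum_card_filter_le_ker S.offDiag (fun x => x.1.1 ⊔ x.2.1),
      sum_congr rfl fun x hx => by
        rw [finrank_sup_eq_two (mem_offDiag.mp hx).2.2], sum_const, smul_eq_mul, offDiag_card]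
  simp_rw [offDiag_card] at hsum_pairs
  have hcount' := congrArg (Nat.cast : ℕ → ℤ) hcount
  have hsum' := congrArg (Nat.cast : ℕ → ℤ) hsum
  have hsum_pairs' := congrArg (Nat.cast : ℕ → ℤ) hsum_pairs
  push_cast [Nat.cast_sub hqqa, Nat.cast_sub hqa, Nat.cast_sub ha,
    Nat.cast_sub (Nat.le_mul_self _)] at hcount' hsum' hsum_pairs'
  refine (eq_one_or_eq_of_sum_sub_sum_eq (T := {φ : Dual F V | φ ≠ 0})
    (g := fun ψ => (#{P ∈ S | P.1 ≤ LinearMap.ker ψ} : ℤ)) (N := #S)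
    (fun ψ hψ => by exact_mod_cast hpos ψ (mem_filter.mp hψ).2)
    (fun ψ _ => by exact_mod_cast card_filter_le _ _) ?_
    (mem_filter.mpr ⟨mem_univ _, hφ⟩)).imp (fun h => by omega) (fun h => by omega)
  rw [hsum', hsum_pairs', hcount', hcard]
  push_cast
  ring

theorem exists_finrank_eq_two_of_card_eq {S : Finset Point} (hq : Even (Fintype.card F))
    (hdiv : ∀ φ : Dual F V, φ ≠ 0 → #{P ∈ S | P.1 ≤ LinearMap.ker φ} ≡ #S [MOD 2])
    (hcard : #S = Fintype.card F + 1) :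
    ∃ L : Submodule F V, finrank F L = 2 ∧ (S : Set Point) = {P | P.1 ≤ L} := by
  have hq2 : 2 ≤ Fintype.card F := Fintype.one_lt_card
  obtain ⟨P, hP, Q, hQ, hPQ⟩ := one_lt_card.mp (show 1 < #S by omega)
  have hL := finrank_sup_eq_two hPQ
  have hV : 2 ≤ finrank F V := hL ▸ Submodule.finrank_le _
  have hpos (φ : Dual F V) (hφ : φ ≠ 0) : 1 ≤ #{P ∈ S | P.1 ≤ LinearMap.ker φ} := by
    have := hdiv φ hφ
    obtain ⟨k, hk⟩ := hq
    unfold Nat.ModEq at this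
    omega
  have hsub (R : Point) (hR : R ∈ S) : R.1 ≤ P.1 ⊔ Q.1 := by
    by_contra hRL
    obtain ⟨φ, hLφ, hRφ⟩ := exists_le_ker_not_le_ker hRL
    have hφ : φ ≠ 0 := by rintro rfl; exact hRφ (by simp)
    have htwo : 2 ≤ #{P ∈ S | P.1 ≤ LinearMap.ker φ} :=
      (card_pair hPQ).ge.trans <| card_le_card <| by
        rw [insert_subset_iff, singleton_subset_iff, mem_filter, mem_filter]
        exact ⟨⟨hP, le_sup_left.trans hLφ⟩, hQ, le_sup_right.trans hLφ⟩
    have hall : {P ∈ S | P.1 ≤ LinearMap.ker φ} = S :=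
      eq_of_subset_of_card_le (filter_subset _ _) <| by
        rcases card_filter_le_ker_eq_one_or_eq hV hcard hpos hφ with h | h <;> omega
    rw [← hall] at hR
    exact hRφ (mem_filter.mp hR).2
  have hline := ncard_setOf_le_of_finrank_eq_two (V := V) hL
  refine ⟨P.1 ⊔ Q.1, hL, Set.eq_of_subset_of_ncard_le (fun R hR => hsub R hR) ?_
    (Set.finite_of_ncard_pos (by omega))⟩
  rw [hline, Set.ncard_coe_finset, hcard]

end PointsAndHyperplanes

/-- Let `q = 2^e` and `S` be a nonempty `2`-divisible set of points in
`PG(v-1,q)`. Then `|S| ≥ q+1`, and if `|S| = q+1` then `S` is the set of points of a line. -/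
theorem stmt_13 (e : ℕ) (he : 1 ≤ e) (hF : Fintype.card F = 2 ^ e)
    (v : ℕ) (S : Set (PGPoint F v)) (hne : S.Nonempty) (hdiv : IsDivisibleSet F 2 S) :
    2 ^ e + 1 ≤ S.ncard ∧
    (S.ncard = 2 ^ e + 1 →
      ∃ L : Submodule F (Fin v → F), finrank F L = 2 ∧ S = {P : PGPoint F v | P.1 ≤ L}) := by
  obtain ⟨T, rfl⟩ := S.toFinite.exists_finset_coe
  have hdivT (φ : Dual F (Fin v → F)) (hφ : φ ≠ 0) :
      #{P ∈ T | P.1 ≤ LinearMap.ker φ} ≡ #T [MOD 2] := by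
    have hker := φ.finrank_ker_add_one_of_ne_zero hφ
    rw [finrank_fin_fun] at hker
    have := hdiv (LinearMap.ker φ) (by omega)
    have hinter : (↑T ∩ {P | P.1 ≤ LinearMap.ker φ} : Set (PGPoint F v))
        = ↑{P ∈ T | P.1 ≤ LinearMap.ker φ} := by
      ext; simp
    rwa [hinter, Set.ncard_coe_finset, Set.ncard_coe_finset, Nat.ModEq.comm] at this
  have hq : Even (Fintype.card F) := hF ▸ (Nat.even_pow.mpr ⟨even_two, by omega⟩)
  rw [Set.ncard_coe_finset, ← hF]
  exact ⟨le_card_of_modEq_card_filter_le_ker (by simpa using hne) hdivT,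
    exists_finrank_eq_two_of_card_eq hq hdivT⟩

end
end

section
/- Let q = 2^e with q > 4 (i.e., e ≥ 3). Then for no dimension v does there exist a 2-divisible set of points S in PG(v−1,q) with |S| = q+3. -/
/-!
Since `q + 3` is odd, every hyperplane meets `S` in an odd number of points, and averaging over
the hyperplanes yields one, `H₀`, meeting `S` in a single point `P₀`. Rescale the other `q + 2`
points into the affine space `AG(v-1,q)` complementary to `H₀`. Every hyperplane not through `P₀`
then contains an odd number of them, so in each parallel class of such hyperplanes exactly one
contains three of the points and the other `q - 1` contain one each. Double counting these
coincidences shows that exactly `6q` ordered pairs of points lie on different lines through `P₀`,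
which forces all but at most three of the points onto a single line through `P₀`. Every such
parallel class separates points on a common line through `P₀`; one that also separates those few
remaining points has no member containing three points.
-/

open Module Finset

noncomputable section
open scoped Classical

variable (F : Type) [Field F] [Fintype F]

open Matrix

section Fibers

variable {α β : Type*} [DecidableEq β] {s : Finset α} {f : α → β}

theorem exists_card_fiber_eq_three_of_odd [Fintype β] (hs : #s = Fintype.card β + 2)
    (hodd : ∀ c, Odd #{a ∈ s | f a = c}) :
    ∃ c, #{a ∈ s | f a = c} = 3 ∧ ∀ c' ≠ c, #{a ∈ s | f a = c'} = 1 := by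
  choose m hm using hodd
  have hsum : ∑ c, m c = 1 := by
    have := card_eq_sum_card_fiberwise (f := f) (t := univ) (s := s) fun _ _ => mem_univ _
    rw [hs, sum_congr rfl fun c _ => hm c, sum_add_distrib, ← mul_sum, sum_const, card_univ,
      smul_eq_mul, mul_one] at this
    omega
  obtain ⟨c, -, hc⟩ : ∃ c ∈ univ, m c ≠ 0 := by
    by_contra! h
    rw [sum_eq_zero h] at hsum
    exact zero_ne_one hsum
  have hrest : ∑ c' ∈ univ.erase c, m c' = 0 := by
    have := add_sum_erase univ m (mem_univ c)
    omega
  have hc1 : m c ≤ 1 := hsum ▸ single_le_sum (fun _ _ => Nat.zero_le _) (mem_univ c)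
  refine ⟨c, by rw [hm]; omega, fun c' hc' => ?_⟩
  have := (sum_eq_zero_iff.1 hrest) c' (mem_erase.2 ⟨hc', mem_univ _⟩)
  rw [hm]; omega

theorem card_filter_ne_and_eq_eq_six [DecidableEq α] {c : β} (h3 : #{a ∈ s | f a = c} = 3)
    (h1 : ∀ c' ≠ c, #{a ∈ s | f a = c'} = 1) :
    #{z ∈ s ×ˢ s | z.1 ≠ z.2 ∧ f z.1 = f z.2} = 6 := by
  have : {z ∈ s ×ˢ s | z.1 ≠ z.2 ∧ f z.1 = f z.2} = {a ∈ s | f a = c}.offDiag := by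
    ext ⟨a, b⟩
    simp only [mem_filter, mem_product, mem_offDiag]
    constructor
    · rintro ⟨⟨ha, hb⟩, hab, hfab⟩
      by_contra hc
      have hfa : f a ≠ c := fun hfa => hc ⟨⟨ha, hfa⟩, ⟨hb, hfab ▸ hfa⟩, hab⟩
      exact hab (card_le_one.1 (h1 _ hfa).le a (by simp [ha]) b (by simp [hb, hfab]))
    · rintro ⟨⟨ha, hfa⟩, ⟨hb, hfb⟩, hab⟩
      exact ⟨⟨ha, hb⟩, hab, hfa.trans hfb.symm⟩
  rw [this, offDiag_card, h3]

theorem exists_card_filter_ne_le_three {g : α → β} (hs : 9 ≤ #s) (himg : 3 ≤ #(s.image g))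
    (hcross : #{z ∈ s ×ˢ s | g z.1 ≠ g z.2} ≤ 6 * (#s - 2)) :
    ∃ t, #{a ∈ s | g a ≠ t} ≤ 3 := by
  obtain ⟨a₀, ha₀, hmax⟩ := exists_max_image s (fun a => #{b ∈ s | g b = g a})
    (card_pos.1 (by omega))
  refine ⟨g a₀, ?_⟩
  by_contra! hr
  set B := {b ∈ s | g b = g a₀}
  set R := {b ∈ s | g b ≠ g a₀}
  have hBR : #B + #R = #s := card_filter_add_card_filter_not _
  have hrow : ∀ a, #{b ∈ s | g b = g a} + #{b ∈ s | g a ≠ g b} = #s := fun a => by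
    simpa only [eq_comm, ne_comm] using card_filter_add_card_filter_not (s := s)
      (fun b => g b = g a)
  have hrows : #{z ∈ s ×ˢ s | g z.1 ≠ g z.2} = ∑ a ∈ s, #{b ∈ s | g a ≠ g b} := by
    simp only [card_filter, sum_product]
  have hrow_ge : ∀ a ∈ s, #R ≤ #{b ∈ s | g a ≠ g b} := fun a ha => by
    have := hrow a; have := hmax a ha; omega
  -- a row indexed by `R` contains `B` and a point of `R` in a third class
  have hrow_R : ∀ a ∈ R, #B + 1 ≤ #{b ∈ s | g a ≠ g b} := fun a ha => by
    obtain ⟨ha, hga⟩ := mem_filter.1 ha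
    obtain ⟨c, hc, hc'⟩ := exists_mem_notMem_of_card_lt_card
      ((card_le_two : #({g a₀, g a} : Finset β) ≤ 2).trans_lt himg)
    obtain ⟨b', hb', rfl⟩ := mem_image.1 hc
    simp only [mem_insert, mem_singleton, not_or] at hc'
    rw [← card_insert_of_notMem (s := B) (a := b') (by simp [B, hc'.1])]
    refine card_le_card fun b hb => ?_
    rcases mem_insert.1 hb with rfl | hb
    · exact mem_filter.2 ⟨hb', Ne.symm hc'.2⟩
    · obtain ⟨hb, hgb⟩ := mem_filter.1 hb
      exact mem_filter.2 ⟨hb, fun h => hga (h.trans hgb)⟩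
  have h1 : #B * #R + #R * (#B + 1) ≤ #{z ∈ s ×ˢ s | g z.1 ≠ g z.2} := by
    rw [hrows, ← sum_filter_add_sum_filter_not s fun a => g a = g a₀]
    gcongr
    · simpa only [smul_eq_mul] using
        card_nsmul_le_sum B _ _ fun a ha => hrow_ge a (mem_filter.1 ha).1
    · simpa only [smul_eq_mul] using card_nsmul_le_sum R _ _ hrow_R
  have h2 : #s * #R ≤ #{z ∈ s ×ˢ s | g z.1 ≠ g z.2} := by
    rw [hrows]; exact card_nsmul_le_sum _ _ _ hrow_ge
  rw [← hBR] at hs hcross h2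
  replace hcross : #{z ∈ s ×ˢ s | g z.1 ≠ g z.2} + 12 ≤ 6 * (#B + #R) := by omega
  have hR : #R < 6 := by nlinarith
  obtain h | h : #R = 4 ∨ #R = 5 := by omega
  all_goals rw [h] at h1; omega

end Fibers

section DotProduct

variable {K : Type*} [Field K] {n : Type*} [Fintype n]

theorem exists_dotProduct_eq_one_of_notMem [DecidableEq n] {W : Submodule K (n → K)} {x : n → K}
    (hx : x ∉ W) :
    ∃ t : n → K, (∀ w ∈ W, t ⬝ᵥ w = 0) ∧ t ⬝ᵥ x = 1 := by
  obtain ⟨f, hfx, hfW⟩ := W.exists_dual_map_eq_bot_of_notMem hx inferInstance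
  have hf : ∀ w, (dotProductEquiv K n).symm f ⬝ᵥ w = f w := fun w =>
    congrArg (fun g : Module.Dual K (n → K) => g w) ((dotProductEquiv K n).apply_symm_apply f)
  refine ⟨(f x)⁻¹ • (dotProductEquiv K n).symm f, fun w hw => ?_, ?_⟩
  · have hfw : f w ∈ W.map f := Submodule.mem_map_of_mem hw
    rw [hfW, Submodule.mem_bot] at hfw
    rw [smul_dotProduct, hf, hfw, smul_zero]
  · rw [smul_dotProduct, hf, smul_eq_mul, inv_mul_cancel₀ hfx]

theorem dotProduct_ne_of_sub_mem_span {p a b y : n → K} (hy : y ⬝ᵥ p ≠ 0)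
    (hab : a - b ∈ Submodule.span K {p}) (hne : a ≠ b) : y ⬝ᵥ a ≠ y ⬝ᵥ b := by
  obtain ⟨c, hc⟩ := Submodule.mem_span_singleton.1 hab
  intro h
  have : c * (y ⬝ᵥ p) = 0 := by
    rw [← smul_eq_mul, ← dotProduct_smul, hc, dotProduct_sub, h, sub_self]
  rcases mul_eq_zero.1 this with rfl | h'
  · exact hne (sub_eq_zero.1 (by simpa using hc.symm))
  · exact hy h'

theorem exists_affine_of_filter_eq_singleton [DecidableEq n] {X : Finset (n → K)}
    (hprop : ∀ x ∈ X, ∀ c : K, c • x ∈ X → c • x = x) {y₀ p : n → K}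
    (hp : {x ∈ X | y₀ ⬝ᵥ x = 0} = {p}) :
    ∃ A : Finset (n → K), #A + 1 = #X ∧
      ∀ y, y ⬝ᵥ p ≠ 0 → ∀ c, #{a ∈ A | y ⬝ᵥ a = c} = #{x ∈ X | (y - c • y₀) ⬝ᵥ x = 0} := by
  obtain ⟨hpX, hy₀p⟩ := mem_filter.1 (hp ▸ mem_singleton_self p)
  have hne : ∀ x ∈ X.erase p, y₀ ⬝ᵥ x ≠ 0 := fun x hx h0 =>
    ne_of_mem_erase hx (mem_singleton.1 (hp ▸ mem_filter.2 ⟨mem_of_mem_erase hx, h0⟩))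
  set u : (n → K) → n → K := fun x => (y₀ ⬝ᵥ x)⁻¹ • x
  have hinj : Set.InjOn u (X.erase p) := fun x hx x' hx' h => by
    have hc : ((y₀ ⬝ᵥ x') * (y₀ ⬝ᵥ x)⁻¹) • x = x' := by
      rw [mul_smul]
      change _ • u x = _
      rw [h, smul_smul, mul_inv_cancel₀ (hne x' hx'), one_smul]
    have hcX : ((y₀ ⬝ᵥ x') * (y₀ ⬝ᵥ x)⁻¹) • x ∈ X := by
      rw [hc]; exact mem_of_mem_erase (mem_coe.1 hx')
    exact (hprop x (mem_of_mem_erase hx) _ hcX).symm.trans hc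
  refine ⟨(X.erase p).image u, ?_, fun y hy c => ?_⟩
  · rw [card_image_of_injOn hinj, card_erase_add_one hpX]
  · rw [filter_image, card_image_of_injOn (hinj.mono (filter_subset _ _))]
    refine congrArg card (ext fun x => ?_)
    simp only [mem_filter, mem_erase, u, dotProduct_smul, smul_eq_mul, sub_dotProduct,
      smul_dotProduct, sub_eq_zero]
    by_cases hxp : x = p
    · subst hxp
      simp [hy₀p, hy]
    · by_cases hx : x ∈ X
      · rw [inv_mul_eq_iff_eq_mul₀ (hne x (mem_erase.2 ⟨hxp, hx⟩)), mul_comm]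
        tauto
      · tauto

variable [Fintype K]

theorem card_filter_dotProduct_eq_zero_mul {s : Finset (n → K)} {t d : n → K}
    (hs : ∀ y (c : K), y + c • t ∈ s ↔ y ∈ s) (ht : t ⬝ᵥ d = 1) :
    #{y ∈ s | y ⬝ᵥ d = 0} * Fintype.card K = #s := by
  rw [← card_univ, ← card_product]
  refine card_nbij' (fun z => z.1 + z.2 • t) (fun y => (y - (y ⬝ᵥ d) • t, y ⬝ᵥ d))
    ?_ ?_ ?_ ?_
  · rintro ⟨y, c⟩ h
    simp only [coe_product, Set.mem_prod, mem_coe, mem_filter] at h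
    exact (hs y c).2 h.1.1
  · intro y hy
    have hy : y ∈ s := by simpa using hy
    simp [hs, hy, sub_eq_add_neg, ← neg_smul, ht, add_dotProduct, smul_dotProduct]
  · rintro ⟨y, c⟩ h
    simp only [coe_product, Set.mem_prod, mem_coe, mem_filter] at h
    simp [add_dotProduct, smul_dotProduct, ht, h.1.2]
  · intro y _
    simp

theorem card_filter_dotProduct_eq_zero_mul_card [DecidableEq n] {x : n → K} (hx : x ≠ 0) :
    #{y | y ⬝ᵥ x = 0} * Fintype.card K = Fintype.card K ^ Fintype.card n := by
  obtain ⟨t, -, ht⟩ := exists_dotProduct_eq_one_of_notMem (W := ⊥) (by simpa using hx)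
  rw [card_filter_dotProduct_eq_zero_mul (fun _ _ => by simp) ht, card_univ, Fintype.card_fun]

theorem exists_forall_dotProduct_ne_zero [DecidableEq n] {D : Finset (n → K)} (h0 : 0 ∉ D)
    (hD : #D < Fintype.card K) : ∃ y : n → K, ∀ d ∈ D, y ⬝ᵥ d ≠ 0 := by
  by_contra! h
  have hcover : (univ : Finset (n → K)) ⊆ D.biUnion fun d => {y | y ⬝ᵥ d = 0} := by
    intro y _
    obtain ⟨d, hd, hyd⟩ := h y
    exact mem_biUnion.2 ⟨d, hd, by simpa using hyd⟩
  have hsum : (∑ d ∈ D, #{y : n → K | y ⬝ᵥ d = 0}) * Fintype.card K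
      = #D * Fintype.card K ^ Fintype.card n := by
    rw [sum_mul, sum_congr rfl fun d hd =>
      card_filter_dotProduct_eq_zero_mul_card fun h => h0 (h ▸ hd), sum_const, smul_eq_mul]
  have hle := (card_le_card hcover).trans card_biUnion_le
  rw [card_univ, Fintype.card_fun] at hle
  have hpos : 0 < Fintype.card K ^ Fintype.card n := pow_pos Fintype.card_pos _
  nlinarith [Nat.mul_le_mul_right (Fintype.card K) hle]

theorem exists_card_filter_dotProduct_eq_zero_lt_three [DecidableEq n] {X : Finset (n → K)}
    (h0 : 0 ∉ X) (hX : X.Nonempty) (hcard : #X ≤ 3 * Fintype.card K) :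
    ∃ y ≠ 0, #{x ∈ X | y ⬝ᵥ x = 0} < 3 := by
  set q := Fintype.card K
  obtain ⟨x₀, hx₀⟩ := hX
  set k := #{y : n → K | y ⬝ᵥ x₀ = 0}
  have hk : k * q = q ^ Fintype.card n :=
    card_filter_dotProduct_eq_zero_mul_card fun h => h0 (h ▸ hx₀)
  have hk_pos : 0 < k := card_pos.2 ⟨0, by simp⟩
  have hq : 1 < q := Fintype.one_lt_card
  by_contra! h
  have hcount := card_mul_le_card_mul (fun y x => y ⬝ᵥ x = 0) (s := univ.erase 0) (t := X)
    (m := 3) (n := k - 1) (fun y hy => h y (ne_of_mem_erase hy)) fun x hx => by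
      have hx' : #{y : n → K | y ⬝ᵥ x = 0} = k := by
        refine Nat.eq_of_mul_eq_mul_right (by omega : 0 < q) ?_
        rw [hk, card_filter_dotProduct_eq_zero_mul_card fun h => h0 (h ▸ hx)]
      rw [bipartiteBelow, filter_erase, card_erase_of_mem (by simp), hx']
  rw [card_erase_of_mem (mem_univ _), card_univ, Fintype.card_fun, ← hk] at hcount
  obtain ⟨m, hm⟩ : ∃ m, k = m + 1 := ⟨k - 1, by omega⟩
  rw [hm, Nat.add_sub_cancel, add_mul, one_mul] at hcount
  have : #X * m ≤ 3 * (m * q) := by nlinarith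
  omega

theorem exists_triple_of_odd_fibers {p : n → K} {A : Finset (n → K)}
    (hodd : ∀ y, y ⬝ᵥ p ≠ 0 → ∀ c, Odd #{a ∈ A | y ⬝ᵥ a = c}) (hA : #A = Fintype.card K + 2)
    {y : n → K} (hy : y ⬝ᵥ p ≠ 0) :
    ∃ T ⊆ A, #T = 3 ∧ (∀ a ∈ T, ∀ b ∈ T, y ⬝ᵥ a = y ⬝ᵥ b) ∧
      Set.InjOn (Submodule.span K {p}).mkQ T := by
  obtain ⟨c, h3, -⟩ := exists_card_fiber_eq_three_of_odd hA (hodd y hy)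
  refine ⟨_, filter_subset _ _, h3, fun a ha b hb => ?_, fun a ha b hb hg => ?_⟩
  · rw [(mem_filter.1 ha).2, (mem_filter.1 hb).2]
  · by_contra hne
    exact dotProduct_ne_of_sub_mem_span hy ((Submodule.Quotient.eq _).1 hg) hne
      ((mem_filter.1 ha).2.trans (mem_filter.1 hb).2.symm)

theorem card_filter_mkQ_ne_eq_of_odd_fibers [DecidableEq n] {p : n → K} {A : Finset (n → K)}
    (hodd : ∀ y, y ⬝ᵥ p ≠ 0 → ∀ c, Odd #{a ∈ A | y ⬝ᵥ a = c})
    (hA : #A = Fintype.card K + 2) (hp : p ≠ 0) :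
    #{z ∈ A ×ˢ A | (Submodule.span K {p}).mkQ z.1 ≠ (Submodule.span K {p}).mkQ z.2}
      = 6 * Fintype.card K := by
  set g := (Submodule.span K {p}).mkQ
  set Y : Finset (n → K) := {y | y ⬝ᵥ p ≠ 0}
  set P := {z ∈ A ×ˢ A | g z.1 ≠ g z.2}
  -- distinct points of one class never collide, so these are all the collisions of `y` on `A`
  have hcollide : ∀ y ∈ Y, #{z ∈ P | y ⬝ᵥ z.1 = y ⬝ᵥ z.2} = 6 := by
    intro y hy
    replace hy : y ⬝ᵥ p ≠ 0 := (mem_filter.1 hy).2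
    obtain ⟨c, h3, h1⟩ := exists_card_fiber_eq_three_of_odd hA (hodd y hy)
    rw [← card_filter_ne_and_eq_eq_six h3 h1, filter_filter]
    refine congrArg card <| filter_congr fun z _ =>
      ⟨fun ⟨hg, he⟩ => ⟨?_, he⟩, fun ⟨hne, he⟩ => ⟨?_, he⟩⟩
    · exact fun h => hg (congrArg g h)
    · exact fun hg => dotProduct_ne_of_sub_mem_span hy ((Submodule.Quotient.eq _).1 hg) hne he
  have hequi : ∀ z ∈ P, #{y ∈ Y | y ⬝ᵥ z.1 = y ⬝ᵥ z.2} * Fintype.card K = #Y := by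
    intro z hz
    obtain ⟨t, ht, htd⟩ := exists_dotProduct_eq_one_of_notMem
      ((Submodule.Quotient.eq _).not.1 (mem_filter.1 hz).2)
    have htp : t ⬝ᵥ p = 0 := ht p (Submodule.mem_span_singleton_self p)
    rw [← card_filter_dotProduct_eq_zero_mul (s := Y)
      (fun y c => by simp [Y, add_dotProduct, smul_dotProduct, htp]) htd]
    simp_rw [dotProduct_sub, sub_eq_zero]
  obtain ⟨t, -, htp⟩ := exists_dotProduct_eq_one_of_notMem (W := ⊥) (x := p)
    (by simpa using hp)
  have hY : 0 < #Y := card_pos.2 ⟨t, by simp [Y, htp]⟩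
  have hcount := card_mul_eq_card_mul (fun y (z : (n → K) × (n → K)) => y ⬝ᵥ z.1 = y ⬝ᵥ z.2)
    (s := Y) (t := P) (m := 6) (n := #Y / Fintype.card K) hcollide fun z hz => by
      rw [bipartiteBelow, ← hequi z hz, Nat.mul_div_cancel _ Fintype.card_pos]
  obtain ⟨z, hz⟩ : P.Nonempty := nonempty_of_ne_empty fun h => by
    rw [h, card_empty, zero_mul] at hcount; omega
  have hk := hequi z hz
  rw [← hk, Nat.mul_div_cancel _ Fintype.card_pos] at hcount
  have hk_pos : 0 < #{y ∈ Y | y ⬝ᵥ z.1 = y ⬝ᵥ z.2} := by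
    rw [← hk] at hY; exact Nat.pos_of_mul_pos_right hY
  exact Nat.eq_of_mul_eq_mul_right hk_pos (by rw [← hcount]; ring)

theorem card_ne_of_odd_fibers [DecidableEq n] (hq : 8 ≤ Fintype.card K) {p : n → K} (hp : p ≠ 0)
    {A : Finset (n → K)} (hodd : ∀ y, y ⬝ᵥ p ≠ 0 → ∀ c, Odd #{a ∈ A | y ⬝ᵥ a = c}) :
    #A ≠ Fintype.card K + 2 := by
  intro hA
  set g := (Submodule.span K {p}).mkQ
  obtain ⟨y₀, -, hy₀⟩ := exists_dotProduct_eq_one_of_notMem (W := ⊥) (x := p)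
    (by simpa using hp)
  have himg : 3 ≤ #(A.image g) := by
    obtain ⟨T, hTA, hT3, -, hinj⟩ :=
      exists_triple_of_odd_fibers hodd hA (y := y₀) (by simp [hy₀])
    rw [← hT3, ← card_image_of_injOn hinj]
    exact card_le_card (image_subset_image hTA)
  obtain ⟨t, hR⟩ := exists_card_filter_ne_le_three (by omega) himg
    (by rw [card_filter_mkQ_ne_eq_of_odd_fibers hodd hA hp, hA]; omega)
  set R := {a ∈ A | g a ≠ t}
  -- `y` is injective on each class, and now also on `R`, so no fibre has three points
  obtain ⟨y, hy⟩ := exists_forall_dotProduct_ne_zero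
    (D := insert p (R.offDiag.image fun z => z.1 - z.2))
    (by simp [hp.symm, sub_eq_zero, and_comm])
    (by
      have := card_insert_le p (R.offDiag.image fun z => z.1 - z.2)
      have := card_image_le (s := R.offDiag) (f := fun z => z.1 - z.2)
      have := Nat.mul_le_mul_right #R hR
      rw [offDiag_card] at *
      omega)
  obtain ⟨T, hTA, hT3, hTy, hinj⟩ :=
    exists_triple_of_odd_fibers hodd hA (hy p (mem_insert_self _ _))
  have hTt : #{a ∈ T | g a = t} ≤ 1 := card_le_one.2 fun a ha b hb =>
    hinj (mem_filter.1 ha).1 (mem_filter.1 hb).1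
      ((mem_filter.1 ha).2.trans (mem_filter.1 hb).2.symm)
  obtain ⟨a, ha, b, hb, hab⟩ := one_lt_card.1 (by
    have := card_filter_add_card_filter_not (s := T) (fun a => g a = t)
    simp only [← ne_eq] at this
    omega : 1 < #{a ∈ T | g a ≠ t})
  obtain ⟨ha, hga⟩ := mem_filter.1 ha
  obtain ⟨hb, hgb⟩ := mem_filter.1 hb
  have hmem : (a, b) ∈ R.offDiag :=
    mem_offDiag.2 ⟨mem_filter.2 ⟨hTA ha, hga⟩, mem_filter.2 ⟨hTA hb, hgb⟩, hab⟩
  exact hy (a - b) (mem_insert_of_mem (mem_image.2 ⟨(a, b), hmem, rfl⟩))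
    (by rw [dotProduct_sub, hTy a ha b hb, sub_self])

theorem card_ne_of_odd_card_filter_dotProduct_eq_zero [DecidableEq n] (hq : 8 ≤ Fintype.card K)
    {X : Finset (n → K)} (h0 : 0 ∉ X) (hprop : ∀ x ∈ X, ∀ c : K, c • x ∈ X → c • x = x)
    (hodd : ∀ y ≠ 0, Odd #{x ∈ X | y ⬝ᵥ x = 0}) : #X ≠ Fintype.card K + 3 := by
  intro hX
  obtain ⟨y₀, hy₀, hlt⟩ := exists_card_filter_dotProduct_eq_zero_lt_three h0
    (card_pos.1 (by omega)) (by omega : #X ≤ 3 * Fintype.card K)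
  obtain ⟨p, hp⟩ := card_eq_one.1 (show #{x ∈ X | y₀ ⬝ᵥ x = 0} = 1 by
    obtain ⟨k, hk⟩ := hodd y₀ hy₀; omega)
  obtain ⟨hpX, hy₀p⟩ := mem_filter.1 (hp ▸ mem_singleton_self p)
  have hp0 : p ≠ 0 := by rintro rfl; exact h0 hpX
  obtain ⟨A, hA, hfib⟩ := exists_affine_of_filter_eq_singleton hprop hp
  refine card_ne_of_odd_fibers hq hp0 (A := A) (fun y hy c => ?_) (by omega)
  rw [hfib y hy c]
  refine hodd _ fun h => hy ?_
  rw [sub_eq_zero.1 h, smul_dotProduct, hy₀p, smul_zero]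

end DotProduct

theorem IsDivisibleSet.exists_finset {K : Type} [Field K] [Fintype K] {v Δ : ℕ}
    {S : Set (PGPoint K v)} (hS : IsDivisibleSet K Δ S) :
    ∃ X : Finset (Fin v → K), #X = S.ncard ∧ 0 ∉ X ∧
      (∀ x ∈ X, ∀ c : K, c • x ∈ X → c • x = x) ∧
      ∀ y ≠ 0, #X ≡ #{x ∈ X | y ⬝ᵥ x = 0} [MOD Δ] := by
  set rep : PGPoint K v → Fin v → K := fun P => (Projectivization.mk'' P.1 P.2).rep
  have hspan : ∀ P, P.1 = K ∙ rep P := fun P =>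
    (Projectivization.submodule_mk'' _ _).symm.trans (Projectivization.submodule_eq _)
  have hrep0 : ∀ P, rep P ≠ 0 := fun P => Projectivization.rep_nonzero _
  have hinj : Function.Injective rep := fun P P' h => Subtype.ext (by rw [hspan, hspan P', h])
  refine ⟨S.toFinset.image rep, ?_, ?_, ?_, fun y hy => ?_⟩
  · rw [card_image_of_injective _ hinj, Set.ncard_eq_toFinset_card']
  · simp [hrep0]
  · simp only [mem_image, Set.mem_toFinset]
    rintro _ ⟨P, -, rfl⟩ c ⟨P', -, hP'⟩
    have hc : c ≠ 0 := by rintro rfl; exact hrep0 P' (by rw [hP', zero_smul])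
    have hPP : P' = P := Subtype.ext <| (hspan P').trans <| by
      rw [hP', Submodule.span_singleton_smul_eq hc.isUnit]; exact (hspan P).symm
    rw [hPP] at hP'
    exact hP'.symm
  set H := LinearMap.ker (dotProductEquiv K (Fin v) y)
  have hH : finrank K H = v - 1 := by
    have := Module.Dual.finrank_ker_add_one_of_ne_zero
      ((LinearEquiv.map_ne_zero_iff (dotProductEquiv K (Fin v))).2 hy)
    rw [Module.finrank_fin_fun] at this
    exact Nat.eq_sub_of_add_eq this
  have hcap : (S ∩ {P | P.1 ≤ H}).ncard = #{x ∈ S.toFinset.image rep | y ⬝ᵥ x = 0} := by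
    have : {P : PGPoint K v | P.1 ≤ H} = rep ⁻¹' {x | y ⬝ᵥ x = 0} := by
      ext P
      rw [Set.mem_ofPred_eq, hspan P, Submodule.span_singleton_le_iff_mem]
      rfl
    rw [← Set.ncard_coe_finset, ← Set.ncard_image_of_injective _ hinj, this,
      Set.image_inter_preimage]
    congr 1
    ext x
    simp
  rw [card_image_of_injective _ hinj, ← Set.ncard_eq_toFinset_card', ← hcap]
  exact hS H hH

/-- For even `q = 2^e > 4` there is no dimension `v` admitting a
`2`-divisible set of points of cardinality `q+3` in `PG(v-1,q)`. -/
theorem stmt_15 (e : ℕ) (he : 3 ≤ e) (hF : Fintype.card F = 2 ^ e) :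
    ∀ v : ℕ, ¬ ∃ S : Set (PGPoint F v),
      IsDivisibleSet F 2 S ∧ S.ncard = 2 ^ e + 3 := by
  rintro v ⟨S, hS, hcard⟩
  obtain ⟨X, hX, h0, hprop, hmod⟩ := hS.exists_finset
  have hq : 8 ≤ Fintype.card F := hF ▸ Nat.pow_le_pow_right two_pos he
  have hXodd : Odd #X := by
    rw [hX, hcard]
    exact (Nat.even_pow.2 ⟨even_two, by omega⟩).add_odd (by decide)
  refine card_ne_of_odd_card_filter_dotProduct_eq_zero hq h0 hprop
    (fun y hy => Nat.odd_iff.2 (Eq.trans (hmod y hy).symm (Nat.odd_iff.1 hXodd))) ?_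
  rw [hX, hcard, hF]

end
end
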